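/- arXiv:2509.12561 — 5 statements merged into one kernel-verified Lean document; each statement's English description precedes it below -/
import Mathlib

section
/- Let m and n be nonnegative integers with n odd. Then X^(m)(n) >= 0. -/
/-- The geometric series `1/(1-q^k) = ∑_{j ≥ 0} q^{k·j}` as a formal power series over `ℤ`:
its coefficient at `q^n` is `1` exactly when `k ∣ n`. -/
def geomSer (k : ℕ) : PowerSeries ℤ := PowerSeries.mk fun n => if k ∣ n then 1 else 0

/-- The formal power series `∑_{k ≥ 1} (-1)^k q^{k(3k+1)+2mk}/(1-q^{2k})`.
For a fixed `n`, only the (finitely many) summands with `1 ≤ k ≤ n` can contribute to the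
coefficient of `q^n` (for `k > n` the lowest exponent `k(3k+1)+2mk` exceeds `n`), so the
coefficient of `q^n` of the infinite sum is the corresponding finite sum of coefficients. -/
noncomputable def seriesA (m : ℕ) : PowerSeries ℤ :=
  PowerSeries.mk fun n => ∑ k ∈ Finset.Icc 1 n,
    (PowerSeries.coeff (R := ℤ) n)
      (PowerSeries.C (R := ℤ) ((-1) ^ k) * PowerSeries.X ^ (k * (3 * k + 1) + 2 * m * k) *
        geomSer (2 * k))

/-- The formal power series `∑_{k ≥ 1} (-1)^k q^{k(k+1)/2+mk}/(1-q^k)` (same convention). -/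
noncomputable def seriesB (m : ℕ) : PowerSeries ℤ :=
  PowerSeries.mk fun n => ∑ k ∈ Finset.Icc 1 n,
    (PowerSeries.coeff (R := ℤ) n)
      (PowerSeries.C (R := ℤ) ((-1) ^ k) * PowerSeries.X ^ (k * (k + 1) / 2 + m * k) * geomSer k)

/-!
Every exponent `k(3k+1) + 2mk + 2kj` of the first series is even, so at odd `n` the defining
identity reads `X(n) - X(n-2) = -[q^n] ∑_k (-1)^k q^{k(k+1)/2+mk}/(1-q^k)`. In that coefficient
each even index `k = 2l` that contributes forces `l ∣ n` with `l` odd, and then the odd index `l`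
contributes as well; so `k ↦ k/2` injects the `+1` terms into the `-1` terms, the coefficient is
`≤ 0`, and `X(n) ≥ X(n-2) ≥ … ≥ X(1) ≥ 0`.
-/

open PowerSeries

theorem Finset.sum_neg_one_pow_nonpos_of_injOn (s : Finset ℕ) (f : ℕ → ℕ)
    (hmaps : Set.MapsTo f (s.filter Even) (s.filter Odd)) (hinj : Set.InjOn f (s.filter Even)) :
    ∑ k ∈ s, (-1 : ℤ) ^ k ≤ 0 := by
  have heven : ∑ k ∈ s.filter Even, (-1 : ℤ) ^ k = (s.filter Even).card := by
    rw [Finset.sum_congr rfl fun k hk => (Finset.mem_filter.1 hk).2.neg_one_pow]; simp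
  have hodd : ∑ k ∈ s.filter (¬Even ·), (-1 : ℤ) ^ k = -(s.filter Odd).card := by
    simp only [Nat.not_even_iff_odd]
    rw [Finset.sum_congr rfl fun k hk => (Finset.mem_filter.1 hk).2.neg_one_pow]; simp
  have hcard : ((s.filter Even).card : ℤ) ≤ (s.filter Odd).card :=
    Nat.cast_le.mpr (Finset.card_le_card_of_injOn f hmaps hinj)
  rw [← Finset.sum_filter_add_sum_filter_not s Even, heven, hodd]
  linarith

theorem coeff_C_mul_X_pow_mul_geomSer (c : ℤ) (a k n : ℕ) :
    coeff n (C c * X ^ a * geomSer k) = if a ≤ n ∧ k ∣ n - a then c else 0 := by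
  rw [mul_assoc, coeff_C_mul, coeff_X_pow_mul', geomSer]
  by_cases h : a ≤ n
  · by_cases hd : k ∣ n - a <;> simp [h, hd]
  · simp [h]

theorem coeff_seriesA_of_odd (m : ℕ) {n : ℕ} (hn : Odd n) : coeff n (seriesA m) = 0 := by
  rw [seriesA, coeff_mk]
  refine Finset.sum_eq_zero fun k _ => ?_
  rw [coeff_C_mul_X_pow_mul_geomSer, if_neg]
  rintro ⟨hle, t, ht⟩
  have hexp : Even (k * (3 * k + 1) + 2 * m * k) := by
    rcases Nat.even_or_odd k with hk | hk
    · exact (hk.mul_right _).add (even_two_mul _ |>.mul_right _)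
    · exact ((Nat.odd_mul.2 ⟨by decide, hk⟩).add_one.mul_left _).add (even_two_mul _ |>.mul_right _)
  have hn' : n = k * (3 * k + 1) + 2 * m * k + 2 * (k * t) := by
    rw [← mul_assoc, ← ht, Nat.add_sub_cancel' hle]
  exact Nat.not_even_iff_odd.2 hn (hn' ▸ hexp.add (even_two_mul _))

theorem coeff_seriesB (m n : ℕ) :
    coeff n (seriesB m) = ∑ k ∈ (Finset.Icc 1 n).filter
      (fun k => k * (k + 1) / 2 + m * k ≤ n ∧ k ∣ n - (k * (k + 1) / 2 + m * k)), (-1 : ℤ) ^ k := by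
  rw [seriesB, coeff_mk, Finset.sum_filter]
  exact Finset.sum_congr rfl fun k _ => coeff_C_mul_X_pow_mul_geomSer _ _ _ _

theorem odd_and_dvd_of_dvd_sub {m n l : ℕ} (hn : Odd n)
    (hle : 2 * l * (2 * l + 1) / 2 + m * (2 * l) ≤ n)
    (hdvd : 2 * l ∣ n - (2 * l * (2 * l + 1) / 2 + m * (2 * l))) :
    Odd l ∧ l ∣ n ∧ l * (l + 1) / 2 + m * l ≤ n ∧ l ∣ n - (l * (l + 1) / 2 + m * l) := by
  have hexp : 2 * l * (2 * l + 1) / 2 + m * (2 * l) = l * (2 * l + 1 + 2 * m) := by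
    rw [mul_assoc, Nat.mul_div_cancel_left _ two_pos]; ring
  rw [hexp] at hle hdvd
  obtain ⟨t, ht⟩ := hdvd
  have hnl : n = l * (2 * l + 1 + 2 * m + 2 * t) := by
    rw [← Nat.sub_add_cancel hle, ht]; ring
  have hl : Odd l := (Nat.odd_mul.1 (hnl ▸ hn)).1
  have hld : l ∣ n := ⟨_, hnl⟩
  have htri : l * (l + 1) / 2 = l * ((l + 1) / 2) :=
    Nat.mul_div_assoc l (even_iff_two_dvd.1 hl.add_one)
  refine ⟨hl, hld, ?_, Nat.dvd_sub hld (htri ▸ dvd_add (dvd_mul_right _ _) (dvd_mul_left _ _))⟩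
  calc l * (l + 1) / 2 + m * l ≤ l * (l + 1) + m * l := by gcongr; exact Nat.div_le_self _ _
    _ ≤ n := by rw [hnl]; nlinarith

theorem coeff_seriesB_nonpos_of_odd (m : ℕ) {n : ℕ} (hn : Odd n) : coeff n (seriesB m) ≤ 0 := by
  rw [coeff_seriesB]
  refine Finset.sum_neg_one_pow_nonpos_of_injOn _ (· / 2) ?_ ?_
  · intro k hk
    simp only [Finset.mem_coe, Finset.mem_filter, Finset.mem_Icc] at hk ⊢
    obtain ⟨⟨⟨hk1, -⟩, hle, hdvd⟩, l, rfl⟩ := hk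
    rw [← two_mul] at hle hdvd ⊢
    obtain ⟨hl, hld, hcontrib⟩ := odd_and_dvd_of_dvd_sub hn hle hdvd
    rw [Nat.mul_div_cancel_left _ two_pos]
    exact ⟨⟨⟨by omega, Nat.le_of_dvd hn.pos hld⟩, hcontrib⟩, hl⟩
  · intro k₁ hk₁ k₂ hk₂ h
    obtain ⟨l₁, rfl⟩ := (Finset.mem_filter.1 hk₁).2
    obtain ⟨l₂, rfl⟩ := (Finset.mem_filter.1 hk₂).2
    simp only at h
    omega

theorem coeff_one_sub_X_sq_mul_mk_add_two (f : ℕ → ℤ) (n : ℕ) :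
    coeff (n + 2) ((1 - X ^ 2) * mk f) = f (n + 2) - f n := by
  rw [sub_mul, one_mul, map_sub, coeff_X_pow_mul', if_pos (by omega), coeff_mk, coeff_mk,
    Nat.add_sub_cancel]

theorem coeff_one_one_sub_X_sq_mul_mk (f : ℕ → ℤ) : coeff 1 ((1 - X ^ 2) * mk f) = f 1 := by
  rw [sub_mul, one_mul, map_sub, coeff_X_pow_mul', if_neg (by omega), coeff_mk, sub_zero]

/-- Let `m, n` be nonnegative integers with `n` odd, and let `X^(m)` be
defined by `∑_{n ≥ 0} X^(m)(n) q^n = (1/(1-q^2)) (∑_{k≥1} (-1)^k q^{k(3k+1)+2mk}/(1-q^{2k})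
- ∑_{k≥1} (-1)^k q^{k(k+1)/2+mk}/(1-q^k))` (the defining identity is stated with `1-q^2`
multiplied over to the left-hand side). Then `X^(m)(n) ≥ 0`. -/
theorem stmt0 (m : ℕ) (Xc : ℕ → ℤ)
    (hX : (1 - PowerSeries.X ^ 2) * PowerSeries.mk Xc = seriesA m - seriesB m)
    (n : ℕ) (hn : Odd n) : 0 ≤ Xc n := by
  have hcoeff (n : ℕ) (hn : Odd n) : coeff n ((1 - X ^ 2) * mk Xc) = -coeff n (seriesB m) := by
    rw [hX, map_sub, coeff_seriesA_of_odd m hn, zero_sub]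
  obtain ⟨w, rfl⟩ := hn
  induction w with
  | zero =>
    show 0 ≤ Xc 1
    have h := hcoeff 1 odd_one
    rw [coeff_one_one_sub_X_sq_mul_mk] at h
    linarith [coeff_seriesB_nonpos_of_odd m odd_one]
  | succ w ih =>
    have hodd : Odd (2 * w + 1 + 2) := ⟨w + 1, by ring⟩
    have h := hcoeff _ hodd
    rw [coeff_one_sub_X_sq_mul_mk_add_two] at h
    rw [show 2 * (w + 1) + 1 = 2 * w + 1 + 2 by ring]
    linarith [coeff_seriesB_nonpos_of_odd m hodd]
end

section
/- Let m >= 1 and n >= 0 be integers, set t = (n+1)/m^2, let Omega = { (x,y) in R^2 : x*y < (n+1)/2, y - 6x < 2m, y - 4x > 2m, x > 0, y > 0 }, and let M1^(m)(n) be the number of lattice points (points of Z^2) in Omega whose y-coordinate is odd. Then M1^(m)(n) < (1/4)*(n+1)*( log( 3*(sqrt(1+2t)-1) / (2*(sqrt(1+3t)-1)) ) + 1/(sqrt(1+3t)+1) - 1/(sqrt(1+2t)+1) ) + 2.2*sqrt(n+1) + 1. -/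
/-!
Sort the odd lattice points of `Ω` into columns by their abscissa `x ≥ 1`, and write `N = n + 1`.
Column `x` holds at most `x` points (the odd ordinates strictly between `4x + 2m` and `6x + 2m`)
and at most `N/(4x) - 2x - m + 1/2` (those below the hyperbola `xy = N/2`); it is empty unless
`x < x₂`, where the hyperbola meets `y = 4x + 2m`. Up to just past `x₁`, where the hyperbola
meets `y = 6x + 2m`, the first bound sums to at most `(x₁ + 1)(x₁ + 2)/2`. Beyond, the second one
is telescoped against `H z = N/2 log z - 2z² - 2mz` via `log z - log (z - 1) ≥ 1/z`, and as `H`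
increases up to `x₂` the tail is at most `(H x₂ - H x₁)/2`. The main term of the claim equals
`x₁²/2 + (H x₂ - H x₁)/2`, and the rest, `3x₁/2 + 1`, is small because `x₁ ≤ √N/3`.
-/

open Finset Real

lemma sub_div_le_log_sub_log {a b : ℝ} (ha : 0 < a) (hab : a ≤ b) :
    (b - a) / b ≤ log b - log a := by
  have hb : 0 < b := ha.trans_le hab
  have h := one_sub_inv_le_log_of_pos (div_pos hb ha)
  rwa [inv_div, log_div hb.ne' ha.ne', one_sub_div hb.ne'] at h

lemma Finset.sum_Ico_le_sub {f g : ℕ → ℝ} {a b : ℕ} (hab : a ≤ b)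
    (h : ∀ i ∈ Ico a b, f i ≤ g (i + 1) - g i) : ∑ i ∈ Ico a b, f i ≤ g b - g a :=
  (sum_le_sum h).trans (sum_Ico_sub g hab).le

lemma Finset.card_le_add_one_of_forall_le {s : Finset ℕ} {c : ℝ} (hc : -1 ≤ c)
    (h : ∀ j ∈ s, (j : ℝ) ≤ c) : (#s : ℝ) ≤ c + 1 := by
  have hsub : s ⊆ range ⌊c + 1⌋₊ := fun j hj => by
    rw [mem_range, Nat.lt_iff_add_one_le, Nat.le_floor_iff (by linarith)]
    push_cast
    linarith [h j hj]
  calc (#s : ℝ) ≤ ⌊c + 1⌋₊ := by exact_mod_cast (card_le_card hsub).trans (card_range _).le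
    _ ≤ c + 1 := Nat.floor_le (by linarith)

namespace WedgeCount

variable {c m N : ℝ}

/-- The abscissa where the line `y = c x + 2m` meets the hyperbola `x y = N/2`. -/
noncomputable def crossing (c m N : ℝ) : ℝ := m * (√(1 + c * N / (2 * m ^ 2)) - 1) / c

lemma sq_sqrt_one_add_div (hc : 0 ≤ c) (hm : 0 < m) (hN : 0 ≤ N) :
    2 * m ^ 2 * (√(1 + c * N / (2 * m ^ 2)) ^ 2 - 1) = c * N := by
  rw [sq_sqrt (by positivity)]
  field_simp
  ring

lemma crossing_eq_div (hc : 0 < c) (hm : 0 < m) (hN : 0 ≤ N) :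
    crossing c m N = N / (2 * m * (√(1 + c * N / (2 * m ^ 2)) + 1)) := by
  have hR := sq_sqrt_one_add_div hc.le hm hN
  rw [crossing, div_eq_div_iff hc.ne' (by positivity)]
  linear_combination hR

lemma crossing_pos (hc : 0 < c) (hm : 0 < m) (hN : 0 < N) : 0 < crossing c m N := by
  rw [crossing_eq_div hc hm hN.le]
  positivity

lemma crossing_mul (hc : 0 < c) (hm : 0 < m) (hN : 0 ≤ N) :
    crossing c m N * (c * crossing c m N + 2 * m) = N / 2 := by
  have hR := sq_sqrt_one_add_div hc.le hm hN
  rw [crossing]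
  generalize √(1 + c * N / (2 * m ^ 2)) = R at hR
  field_simp
  linear_combination hR

lemma lt_crossing_iff (hc : 0 < c) (hm : 0 < m) (hN : 0 < N) {z : ℝ} (hz : 0 ≤ z) :
    z < crossing c m N ↔ z * (c * z + 2 * m) < N / 2 := by
  have hx := crossing_mul hc hm hN.le
  have hx0 := crossing_pos hc hm hN
  constructor
  · intro h
    nlinarith [mul_le_mul h.le h.le hz hx0.le]
  · intro h
    by_contra! h'
    nlinarith [mul_le_mul h' h' hx0.le hz]

lemma crossing_lt_crossing {c' : ℝ} (hc : 0 < c) (hcc' : c < c') (hm : 0 < m) (hN : 0 < N) :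
    crossing c' m N < crossing c m N := by
  have hc' := hc.trans hcc'
  have hx0 := crossing_pos hc' hm hN
  rw [lt_crossing_iff hc hm hN hx0.le, ← crossing_mul hc' hm hN.le]
  nlinarith [mul_pos hx0 hx0]

noncomputable def potential (m N z : ℝ) : ℝ := N / 2 * log z - 2 * z ^ 2 - 2 * m * z

lemma sub_mul_le_potential_sub (hN : 0 ≤ N) {a b : ℝ} (ha : 0 < a) (hab : a ≤ b) :
    (b - a) * (N / (2 * b) - 2 * (a + b) - 2 * m) ≤ potential m N b - potential m N a := by
  have hb : 0 < b := ha.trans_le hab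
  have hlog := mul_le_mul_of_nonneg_left (sub_div_le_log_sub_log ha hab) (by positivity : 0 ≤ N / 2)
  have h : N / 2 * ((b - a) / b) = (b - a) * (N / (2 * b)) := by field_simp
  unfold potential
  nlinarith

lemma potential_le_potential (hm : 0 < m) (hN : 0 < N) {a b : ℝ} (ha : 0 < a) (hab : a ≤ b)
    (hb : b ≤ crossing 4 m N) : potential m N a ≤ potential m N b := by
  have hb0 : 0 < b := ha.trans_le hab
  have hx := crossing_mul (by norm_num : (0 : ℝ) < 4) hm hN.le
  have hslope : 0 ≤ N / (2 * b) - 2 * (a + b) - 2 * m := by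
    have : 4 * b + 2 * m ≤ N / (2 * b) := by
      rw [le_div_iff₀ (by positivity)]
      nlinarith [mul_le_mul hb (by linarith : 4 * b + 2 * m ≤ 4 * crossing 4 m N + 2 * m)
        (by positivity) (by linarith)]
    linarith
  linarith [sub_mul_le_potential_sub (m := m) hN.le ha hab, mul_nonneg (sub_nonneg.2 hab) hslope]

lemma column_bound_le_potential_sub (hN : 0 ≤ N) {z : ℝ} (hz : 1 < z) :
    N / (4 * z) - 2 * z - m + 1 / 2 ≤ (potential m N z - potential m N (z - 1)) / 2 := by
  have h := sub_mul_le_potential_sub (m := m) hN (sub_pos.2 hz) (sub_le_self z zero_le_one)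
  have : N / (4 * z) = N / (2 * z) / 2 := by ring
  linarith

theorem sum_le_of_column_bounds (hm : 0 < m) (hN : 0 < N) {col : ℕ → ℝ} {K : ℕ}
    (hK : (K : ℝ) ≤ crossing 4 m N + 1) (h_le : ∀ i, col i ≤ i)
    (h_div : ∀ i < K, 0 < i → col i ≤ N / (4 * i) - 2 * i - m + 1 / 2) :
    ∑ i ∈ range K, col i ≤ (crossing 6 m N + 1) * (crossing 6 m N + 2) / 2
      + (potential m N (crossing 4 m N) - potential m N (crossing 6 m N)) / 2 := by
  set x₁ := crossing 6 m N
  set x₂ := crossing 4 m N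
  have hx₁ : 0 < x₁ := crossing_pos (by norm_num) hm hN
  have hx₁₂ : x₁ < x₂ := crossing_lt_crossing (by norm_num) (by norm_num) hm hN
  set L := ⌊x₁⌋₊ + 2
  have hL : (L : ℝ) ≤ x₁ + 2 ∧ x₁ < L - 1 := by
    constructor
    · push_cast [L]; linarith [Nat.floor_le hx₁.le]
    · push_cast [L]; linarith [Nat.lt_floor_add_one x₁]
  have head : ∀ k ≤ L, ∑ i ∈ range k, col i ≤ (x₁ + 1) * (x₁ + 2) / 2 := by
    intro k hk
    have hgauss := sum_Ico_le_sub (f := col) (g := fun k : ℕ => (k : ℝ) * (k - 1) / 2)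
      (Nat.zero_le k) (fun i _ => by push_cast; linarith [h_le i])
    have hk' : (k : ℝ) ≤ x₁ + 2 := le_trans (by exact_mod_cast hk) hL.1
    rw [range_eq_Ico]
    push_cast at hgauss
    nlinarith [(k.cast_nonneg : (0 : ℝ) ≤ k)]
  have hmono : potential m N x₁ ≤ potential m N x₂ :=
    potential_le_potential hm hN hx₁ hx₁₂.le le_rfl
  rcases le_or_gt K L with hKL | hKL
  · linarith [head K hKL]
  have hKL' : (L : ℝ) + 1 ≤ K := by exact_mod_cast hKL
  have tail : ∑ i ∈ Ico L K, col i ≤ (potential m N (K - 1) - potential m N (L - 1)) / 2 := by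
    have := sum_Ico_le_sub (f := col) (g := fun k : ℕ => potential m N ((k : ℝ) - 1) / 2) hKL.le
      (fun i hi => by
        obtain ⟨hLi, hiK⟩ := mem_Ico.1 hi
        have hi1 : (1 : ℝ) < i := by
          have : (L : ℝ) ≤ i := by exact_mod_cast hLi
          linarith
        have := column_bound_le_potential_sub (m := m) hN.le hi1
        push_cast
        rw [add_sub_cancel_right]
        linarith [h_div i hiK (by exact_mod_cast zero_lt_one.trans hi1)])
    linarith
  have h₁ : potential m N x₁ ≤ potential m N (L - 1) :=
    potential_le_potential hm hN hx₁ hL.2.le (by linarith)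
  have h₂ : potential m N (K - 1) ≤ potential m N x₂ :=
    potential_le_potential hm hN (by linarith) (by linarith) (by linarith)
  rw [← sum_range_add_sum_Ico _ hKL.le]
  linarith [head L le_rfl]

def points (m n : ℕ) : Set (ℤ × ℤ) :=
  {p | 0 < p.1 ∧ 4 * p.1 + 2 * m < p.2 ∧ p.2 < 6 * p.1 + 2 * m ∧ 2 * p.1 * p.2 ≤ n ∧ Odd p.2}

/-- `j ∈ column m n x` stands for the point `(x, 4x + 2m + 2j + 1)` of `points m n`. -/
def column (m n x : ℕ) : Finset ℕ :=
  (range x).filter fun j => 2 * x * (4 * x + 2 * m + 2 * j + 1) ≤ n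

lemma card_column_le (m n x : ℕ) : #(column m n x) ≤ x :=
  (card_filter_le _ _).trans (card_range x).le

lemma card_column_le_div {m n x : ℕ} (hx : 0 < x) (h : 2 * x * (4 * x + 2 * m) ≤ n) :
    (#(column m n x) : ℝ) ≤ ((n : ℝ) + 1) / (4 * x) - 2 * x - m + 1 / 2 := by
  have hx' : (0 : ℝ) < x := by exact_mod_cast hx
  have hbound : ∀ j ∈ column m n x, (j : ℝ) ≤ ((n : ℝ) / (2 * x) - 4 * x - 2 * m - 1) / 2 := by
    intro j hj
    have hj' : ((2 * x * (4 * x + 2 * m + 2 * j + 1) : ℕ) : ℝ) ≤ n := by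
      exact_mod_cast (mem_filter.1 hj).2
    rw [le_div_iff₀ two_pos, le_sub_iff_add_le, le_sub_iff_add_le, le_sub_iff_add_le,
      le_div_iff₀ (by positivity)]
    push_cast at hj'
    linarith
  have hc : (-1 : ℝ) ≤ ((n : ℝ) / (2 * x) - 4 * x - 2 * m - 1) / 2 := by
    have h' : ((2 * x * (4 * x + 2 * m) : ℕ) : ℝ) ≤ n := by exact_mod_cast h
    have : 4 * (x : ℝ) + 2 * m ≤ n / (2 * x) := by
      rw [le_div_iff₀ (by positivity)]
      push_cast at h'
      linarith
    linarith
  have hn : (n : ℝ) / (4 * x) ≤ ((n : ℝ) + 1) / (4 * x) := by gcongr; linarith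
  have := card_le_add_one_of_forall_le hc hbound
  have : (n : ℝ) / (2 * x) / 2 = n / (4 * x) := by ring
  linarith

lemma points_subset_image {m n K : ℕ} (hK : ∀ x : ℕ, 2 * x * (4 * x + 2 * m) ≤ n → x < K) :
    points m n ⊆ ((range K).sigma (column m n)).image
      fun p => ((p.1 : ℤ), ((4 * p.1 + 2 * m + 2 * p.2 + 1 : ℕ) : ℤ)) := by
  rintro ⟨x, y⟩ ⟨hx, hlow, hhigh, hprod, k, rfl⟩
  dsimp only at hx hlow hhigh hprod
  lift x to ℕ using hx.le
  obtain ⟨j, hj⟩ : ∃ j : ℕ, (j : ℤ) = k - 2 * x - m := ⟨(k - 2 * x - m).toNat, by omega⟩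
  have hy : 2 * k + 1 = ((4 * x + 2 * m + 2 * j + 1 : ℕ) : ℤ) := by push_cast; omega
  rw [hy] at hprod
  have hprod' : 2 * x * (4 * x + 2 * m + 2 * j + 1) ≤ n := by exact_mod_cast hprod
  simp only [coe_image, Set.mem_image, mem_coe, mem_sigma, mem_range, Prod.mk.injEq]
  refine ⟨⟨x, j⟩, ⟨hK x (le_trans ?_ hprod'), ?_⟩, rfl, hy.symm⟩
  · exact Nat.mul_le_mul_left _ (by omega)
  · exact mem_filter.2 ⟨mem_range.2 (show j < x by omega), hprod'⟩

lemma ncard_points_le {m n K : ℕ} (hK : ∀ x : ℕ, 2 * x * (4 * x + 2 * m) ≤ n → x < K) :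
    (points m n).ncard ≤ ∑ x ∈ range K, #(column m n x) := by
  rw [← card_sigma]
  exact (Set.ncard_le_ncard (points_subset_image hK) (finite_toSet _)).trans
    ((Set.ncard_coe_finset _).trans_le card_image_le)

lemma setOf_odd_mem_region_eq_points (m n : ℕ) :
    {p : ℤ × ℤ | ((p.1 : ℝ), (p.2 : ℝ)) ∈ {P : ℝ × ℝ | P.1 * P.2 < ((n : ℝ) + 1) / 2 ∧
      P.2 - 6 * P.1 < 2 * (m : ℝ) ∧ P.2 - 4 * P.1 > 2 * (m : ℝ) ∧ P.1 > 0 ∧ P.2 > 0} ∧ Odd p.2}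
      = points m n := by
  ext ⟨x, y⟩
  simp only [Set.mem_ofPred_eq, points]
  constructor
  · rintro ⟨⟨hprod, hhigh, hlow, hx, -⟩, hodd⟩
    have hprod' : ((2 * x * y : ℤ) : ℝ) < ((n + 1 : ℤ) : ℝ) := by push_cast; linarith
    refine ⟨by exact_mod_cast hx, ?_, ?_, ?_, hodd⟩
    · exact_mod_cast (show ((4 * x + 2 * m : ℤ) : ℝ) < y by push_cast; linarith)
    · exact_mod_cast (show (y : ℝ) < ((6 * x + 2 * m : ℤ) : ℝ) by push_cast; linarith)
    · have := Int.cast_lt.1 hprod'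
      omega
  · rintro ⟨hx, hlow, hhigh, hprod, hodd⟩
    have hprod' : ((2 * x * y : ℤ) : ℝ) ≤ n := by exact_mod_cast hprod
    have hlow' : ((4 * x + 2 * m : ℤ) : ℝ) < y := by exact_mod_cast hlow
    have hhigh' : (y : ℝ) < ((6 * x + 2 * m : ℤ) : ℝ) := by exact_mod_cast hhigh
    have hx' : (0 : ℝ) < x := by exact_mod_cast hx
    push_cast at hprod' hlow' hhigh'
    have hm : (0 : ℝ) ≤ m := m.cast_nonneg
    exact ⟨⟨by linarith, by linarith, by linarith, hx', by linarith⟩, hodd⟩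

lemma natCast_lt_crossing_four_iff {m n : ℕ} (hm : 0 < m) (x : ℕ) :
    (x : ℝ) < crossing 4 m ((n : ℝ) + 1) ↔ 2 * x * (4 * x + 2 * m) ≤ n := by
  rw [lt_crossing_iff four_pos (by exact_mod_cast hm) (by positivity) x.cast_nonneg,
    ← Nat.lt_succ_iff, ← Nat.cast_lt (α := ℝ)]
  push_cast
  constructor <;> intro h <;> linarith

lemma mainTerm_eq_potential (hm : 0 < m) (hN : 0 < N) {t : ℝ} (ht : t = N / m ^ 2) :
    1 / 4 * N * (log (3 * (√(1 + 2 * t) - 1) / (2 * (√(1 + 3 * t) - 1)))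
        + 1 / (√(1 + 3 * t) + 1) - 1 / (√(1 + 2 * t) + 1))
      = crossing 6 m N ^ 2 / 2
        + (potential m N (crossing 4 m N) - potential m N (crossing 6 m N)) / 2 := by
  have hA : √(1 + 2 * t) = √(1 + 4 * N / (2 * m ^ 2)) := by rw [ht]; ring_nf
  have hB : √(1 + 3 * t) = √(1 + 6 * N / (2 * m ^ 2)) := by rw [ht]; ring_nf
  have hx₁ := crossing_pos (by norm_num : (0 : ℝ) < 6) hm hN
  have hx₂ := crossing_pos (by norm_num : (0 : ℝ) < 4) hm hN
  have hratio : 3 * (√(1 + 2 * t) - 1) / (2 * (√(1 + 3 * t) - 1))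
      = crossing 4 m N / crossing 6 m N := by
    have hB1 : √(1 + 3 * t) - 1 ≠ 0 := by
      intro h
      rw [crossing, ← hB, h] at hx₁
      simp at hx₁
    rw [crossing, crossing, ← hA, ← hB]
    field_simp
    ring
  have hinv : ∀ c : ℝ, 0 < c →
      1 / (√(1 + c * N / (2 * m ^ 2)) + 1) = 2 * m * crossing c m N / N := by
    intro c hc
    rw [crossing_eq_div hc hm hN.le]
    field_simp
  rw [hratio, log_div hx₂.ne' hx₁.ne', hA, hB, hinv 6 (by norm_num), hinv 4 (by norm_num)]
  unfold potential
  field_simp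
  linear_combination 4 * (crossing_mul (by norm_num : (0 : ℝ) < 4) hm hN.le
    - crossing_mul (by norm_num : (0 : ℝ) < 6) hm hN.le)

end WedgeCount

open WedgeCount in
/-- Let `m ≥ 1` and `n ≥ 0` be integers, set `t = (n+1)/m²`, let
`Ω = {(x,y) ∈ ℝ² : xy < (n+1)/2, y - 6x < 2m, y - 4x > 2m, x > 0, y > 0}`, and let
`M₁^(m)(n)` be the number of lattice points (points of `ℤ²`) in `Ω` whose `y`-coordinate
is odd.  Then
`M₁^(m)(n) < (1/4)(n+1)(log(3(√(1+2t)-1)/(2(√(1+3t)-1))) + 1/(√(1+3t)+1) - 1/(√(1+2t)+1))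
+ 2.2√(n+1) + 1`. -/
theorem stmt7 (m n : ℕ) (hm : 1 ≤ m) (t : ℝ) (ht : t = ((n : ℝ) + 1) / (m : ℝ) ^ 2)
    (Ω : Set (ℝ × ℝ))
    (hΩ : Ω = {P : ℝ × ℝ | P.1 * P.2 < ((n : ℝ) + 1) / 2 ∧ P.2 - 6 * P.1 < 2 * (m : ℝ) ∧
      P.2 - 4 * P.1 > 2 * (m : ℝ) ∧ P.1 > 0 ∧ P.2 > 0})
    (M1 : ℕ) (hM1 : M1 = Set.ncard {p : ℤ × ℤ | ((p.1 : ℝ), (p.2 : ℝ)) ∈ Ω ∧ Odd p.2}) :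
    (M1 : ℝ) < (1 / 4) * ((n : ℝ) + 1) *
        (Real.log (3 * (Real.sqrt (1 + 2 * t) - 1) / (2 * (Real.sqrt (1 + 3 * t) - 1)))
          + 1 / (Real.sqrt (1 + 3 * t) + 1) - 1 / (Real.sqrt (1 + 2 * t) + 1))
      + 2.2 * Real.sqrt ((n : ℝ) + 1) + 1 := by
  subst hΩ hM1
  have hm' : (0 : ℝ) < m := by exact_mod_cast hm
  have hN : (0 : ℝ) < n + 1 := by positivity
  rw [setOf_odd_mem_region_eq_points, mainTerm_eq_potential hm' hN ht]
  set x₁ := crossing 6 m ((n : ℝ) + 1)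
  set x₂ := crossing 4 m ((n : ℝ) + 1)
  have hx₁ : x₁ ≤ √((n : ℝ) + 1) / 3 := by
    nlinarith [crossing_pos (by norm_num : (0 : ℝ) < 6) hm' hN, sq_sqrt hN.le,
      crossing_mul (by norm_num : (0 : ℝ) < 6) hm' hN.le, sqrt_nonneg ((n : ℝ) + 1)]
  calc ((points m n).ncard : ℝ) ≤ ∑ i ∈ range ⌈x₂⌉₊, (#(column m n i) : ℝ) := by
        exact_mod_cast ncard_points_le (n := n) (K := ⌈x₂⌉₊) fun x hx =>
          Nat.lt_ceil.2 ((natCast_lt_crossing_four_iff hm x).2 hx)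
    _ ≤ (x₁ + 1) * (x₁ + 2) / 2 + (potential m (n + 1) x₂ - potential m (n + 1) x₁) / 2 :=
        sum_le_of_column_bounds hm' hN (Nat.ceil_lt_add_one (crossing_pos four_pos hm' hN).le).le
          (fun i => by exact_mod_cast card_column_le m n i)
          fun i hi hi0 => card_column_le_div hi0
            ((natCast_lt_crossing_four_iff hm i).1 (Nat.lt_ceil.1 hi))
    _ < _ := by nlinarith [sqrt_pos.2 hN]
end

section
/- Let m >= 1 and n >= 0 be integers, set t = (n+1)/m^2, let Omega' = { (x,y) in R^2 : x*y < (n+1)/2, 2x - 3y < 2m, 4x - y > 2m, x > 0, y > 0 }, and let M2^(m)(n) be the number of lattice points (points of Z^2) in Omega' whose y-coordinate is odd. Then M2^(m)(n) > (1/4)*(n+1)*( 1/(sqrt(1+3t)+1) - 1/(sqrt(1+2t)+1) + log( 2*(sqrt(1+3t)+1) / (sqrt(1+2t)+1) ) ) - 3.7*sqrt(n+1) - m - 1. -/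
lemma lin1 (x s : ℝ) (h : 3*x^2 ≤ s^2) (hx : 0 < x) (hs : 0 < s) : x ≤ (3/5)*s := by
  nlinarith
lemma lin2 (x s : ℝ) (h : x^2 ≤ 2*s^2) (hx : 0 < x) (hs : 0 < s) : x ≤ (3/2)*s := by
  nlinarith

lemma key (m a b s : ℝ) (p r : ℕ) (hm : 1 ≤ m) (hp : 1 ≤ p) (hpr : p ≤ r)
    (hap : 2*(p:ℝ) - 1 ≤ a) (hap' : a < 2*(p:ℝ)+1)
    (hbr : 2*(r:ℝ) - 1 ≤ b) (hbr' : b < 2*(r:ℝ)+1)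
    (ha : a*(3*a+2*m) = s^2) (hb : b*(b+2*m) = 2*s^2)
    (hb0 : 0 < b) (hs : 1 ≤ s) :
    (5/4)*(p:ℝ)^2 + (m/2-1)*p - ((r:ℝ)-p)*(m/2+1) - ((r:ℝ)^2-(p:ℝ)^2)/4
      - (2*(p:ℝ)+1-a)*(3*a+2*m)/4 + 3*a^2/8 - b^2/16 + 3.7*s + m + 1 > 0 := by
  have hp1 : (1:ℝ) ≤ (p:ℝ) := by exact_mod_cast hp
  have hpr' : (p:ℝ) ≤ (r:ℝ) := by exact_mod_cast hpr
  have ha1 : 1 ≤ a := by linarith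
  have ha0 : 0 < a := by linarith
  obtain ⟨e, he⟩ : ∃ e : ℝ, e = 2*(p:ℝ)+1-a := ⟨_, rfl⟩
  obtain ⟨f, hf⟩ : ∃ f : ℝ, f = b - (2*(r:ℝ)-1) := ⟨_, rfl⟩
  have he0 : 0 < e := by rw [he]; linarith
  have he2 : e ≤ 2 := by rw [he]; linarith
  have hf0 : 0 ≤ f := by rw [hf]; linarith
  have hf2 : f ≤ 2 := by rw [hf]; linarith
  have hpe : (p:ℝ) = (a+e-1)/2 := by rw [he]; ring
  have hre : (r:ℝ) = (b-f+1)/2 := by rw [hf]; ring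
  have h3a : 3*a^2 ≤ s^2 := by
    nlinarith [mul_nonneg ha0.le (by linarith : (0:ℝ) ≤ m)]
  have hb2 : b^2 ≤ 2*s^2 := by
    nlinarith [mul_nonneg hb0.le (by linarith : (0:ℝ) ≤ m)]
  have hs0 : (0:ℝ) < s := by linarith
  have has : a ≤ (3/5)*s := lin1 a s h3a ha0 hs0
  have hbs : b ≤ (3/2)*s := lin2 b s hb2 hb0 hs0
  rw [hpe, hre]
  have hmf : 0 ≤ m*f := mul_nonneg (by linarith) hf0
  have hbf : 0 ≤ b*f := mul_nonneg hb0.le hf0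
  have hee : 0 ≤ e^2 := sq_nonneg e
  have hff : f^2 ≤ 2*f := by rw [sq]; exact mul_le_mul_of_nonneg_right hf2 hf0
  have hiden : (5/4)*((a+e-1)/2)^2 + (m/2-1)*((a+e-1)/2)
      - ((b-f+1)/2-(a+e-1)/2)*(m/2+1) - (((b-f+1)/2)^2-((a+e-1)/2)^2)/4
      - (2*((a+e-1)/2)+1-a)*(3*a+2*m)/4 + 3*a^2/8 - b^2/16 + 3.7*s + m + 1
      = (13 + 59.2*s + 4*m + 10*f + 4*(m*f) - f^2 - 12*e + 6*e^2 - 10*b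
          + 2*(b*f) - 12*a)/16 := by
    linear_combination (1/4)*ha - (1/8)*hb
  rw [hiden]
  linarith [hmf, hbf, hee, hff, he0, he2, hf0, has, hbs, hs, hm]

lemma sum_odds (p : ℕ) : ∑ j ∈ Finset.Ioc 0 p, (2*(j:ℝ)-1) = (p:ℝ)^2 := by
  induction p with
  | zero => simp
  | succ k ih =>
      rw [Finset.sum_Ioc_succ_top (Nat.zero_le _), ih]
      push_cast; ring

lemma tele (p : ℕ) : ∀ r, p ≤ r →
    ∑ j ∈ Finset.Ioc p r, (Real.log (2*(j:ℝ)+1) - Real.log (2*(j:ℝ)-1))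
      = Real.log (2*(r:ℝ)+1) - Real.log (2*(p:ℝ)+1) := by
  intro r
  induction r with
  | zero => intro h; interval_cases p; simp
  | succ k ih =>
      intro h
      rcases Nat.lt_or_ge p (k+1) with h' | h'
      · have hpk : p ≤ k := by omega
        rw [Finset.sum_Ioc_succ_top hpk, ih hpk]
        push_cast; ring
      · have : p = k+1 := by omega
        subst this
        simp

lemma sum_est (N mR a : ℝ) (p r : ℕ) (hp : 1 ≤ p) (hpr : p ≤ r)
    (hN0 : 0 < N) (hm1 : 1 ≤ mR) (ha0 : 0 < a)
    (ha : a*(3*a+2*mR) = N)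
    (hpa : 2*(p:ℝ)-1 ≤ a) (hpa' : a < 2*(p:ℝ)+1) :
    ∑ j ∈ Finset.Ioc 0 r,
      (min (N/(2*(2*(j:ℝ)-1))) (3*(2*(j:ℝ)-1)/2 + mR) - (mR/2 + (2*(j:ℝ)-1)/4) - 1)
    ≥ (5/4)*(p:ℝ)^2 + (mR/2-1)*(p:ℝ)
      + (N/4)*(Real.log (2*(r:ℝ)+1) - Real.log (2*(p:ℝ)+1))
      - ((r:ℝ)-(p:ℝ))*(mR/2+1) - ((r:ℝ)^2-(p:ℝ)^2)/4 := by
  rw [← Finset.sum_Ioc_consecutive _ (Nat.zero_le p) hpr]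
  have key2 : ∀ q : ℕ, (∑ j ∈ Finset.Ioc 0 q, (2*(j:ℝ)-1)) = (q:ℝ)^2 := sum_odds
  -- first block : exact evaluation
  have S1 : ∑ j ∈ Finset.Ioc 0 p,
      (min (N/(2*(2*(j:ℝ)-1))) (3*(2*(j:ℝ)-1)/2 + mR) - (mR/2 + (2*(j:ℝ)-1)/4) - 1)
      = (5/4)*(p:ℝ)^2 + (mR/2-1)*(p:ℝ) := by
    have hcong : ∀ j ∈ Finset.Ioc 0 p,
        (min (N/(2*(2*(j:ℝ)-1))) (3*(2*(j:ℝ)-1)/2 + mR) - (mR/2 + (2*(j:ℝ)-1)/4) - 1)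
        = (5/4)*(2*(j:ℝ)-1) + (mR/2 - 1) := by
      intro j hj
      simp only [Finset.mem_Ioc] at hj
      have hj1 : (1:ℝ) ≤ (j:ℝ) := by exact_mod_cast hj.1
      have hjp : (j:ℝ) ≤ (p:ℝ) := by exact_mod_cast hj.2
      have hy1 : (1:ℝ) ≤ 2*(j:ℝ)-1 := by linarith
      have hya : 2*(j:ℝ)-1 ≤ a := by linarith
      have hmin : min (N/(2*(2*(j:ℝ)-1))) (3*(2*(j:ℝ)-1)/2 + mR) = 3*(2*(j:ℝ)-1)/2 + mR := by
        apply min_eq_right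
        rw [le_div_iff₀ (by linarith : (0:ℝ) < 2*(2*(j:ℝ)-1))]
        nlinarith [mul_nonneg (by linarith : (0:ℝ) ≤ a - (2*(j:ℝ)-1))
          (by linarith : (0:ℝ) ≤ 3*(a + (2*(j:ℝ)-1)) + 2*mR)]
      rw [hmin]; ring
    rw [Finset.sum_congr rfl hcong, Finset.sum_add_distrib, ← Finset.mul_sum, key2,
      Finset.sum_const, Nat.card_Ioc, nsmul_eq_mul]
    simp only [Nat.sub_zero]
    push_cast
    ring
  rw [S1]
  -- second block : lower bound
  have S2 : ∑ j ∈ Finset.Ioc p r,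
      (min (N/(2*(2*(j:ℝ)-1))) (3*(2*(j:ℝ)-1)/2 + mR) - (mR/2 + (2*(j:ℝ)-1)/4) - 1)
      ≥ (N/4)*(Real.log (2*(r:ℝ)+1) - Real.log (2*(p:ℝ)+1))
        - ((r:ℝ)-(p:ℝ))*(mR/2+1) - ((r:ℝ)^2-(p:ℝ)^2)/4 := by
    have hbound : ∀ j ∈ Finset.Ioc p r,
        (N/4)*(Real.log (2*(j:ℝ)+1) - Real.log (2*(j:ℝ)-1)) - (mR/2+1) - (2*(j:ℝ)-1)/4
        ≤ (min (N/(2*(2*(j:ℝ)-1))) (3*(2*(j:ℝ)-1)/2 + mR) - (mR/2 + (2*(j:ℝ)-1)/4) - 1) := by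
      intro j hj
      simp only [Finset.mem_Ioc] at hj
      have hj1 : (p:ℝ) < (j:ℝ) := by exact_mod_cast hj.1
      have hp1 : (1:ℝ) ≤ (p:ℝ) := by exact_mod_cast hp
      have hy1 : (1:ℝ) ≤ 2*(j:ℝ)-1 := by linarith
      have hy0 : (0:ℝ) < 2*(j:ℝ)-1 := by linarith
      have hya : a ≤ 2*(j:ℝ)-1 := by
        have : (p:ℝ) + 1 ≤ (j:ℝ) := by
          have : p + 1 ≤ j := hj.1
          exact_mod_cast this
        linarith
      have hmin : min (N/(2*(2*(j:ℝ)-1))) (3*(2*(j:ℝ)-1)/2 + mR) = N/(2*(2*(j:ℝ)-1)) := by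
        apply min_eq_left
        rw [div_le_iff₀ (by linarith : (0:ℝ) < 2*(2*(j:ℝ)-1))]
        nlinarith [mul_nonneg (by linarith : (0:ℝ) ≤ (2*(j:ℝ)-1) - a)
          (by linarith : (0:ℝ) ≤ 3*(a + (2*(j:ℝ)-1)) + 2*mR)]
      rw [hmin]
      have hlog : Real.log (2*(j:ℝ)+1) - Real.log (2*(j:ℝ)-1) ≤ 2/(2*(j:ℝ)-1) := by
        rw [← Real.log_div (by linarith) (by linarith)]
        have h1 := Real.log_le_sub_one_of_pos
          (show (0:ℝ) < (2*(j:ℝ)+1)/(2*(j:ℝ)-1) by positivity)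
        have h2 : (2*(j:ℝ)+1)/(2*(j:ℝ)-1) - 1 = 2/(2*(j:ℝ)-1) := by
          field_simp
          norm_num
        linarith
      have hmul : (N/4)*(Real.log (2*(j:ℝ)+1) - Real.log (2*(j:ℝ)-1)) ≤ (N/4)*(2/(2*(j:ℝ)-1)) := by
        apply mul_le_mul_of_nonneg_left hlog (by linarith)
      have heq : (N/4)*(2/(2*(j:ℝ)-1)) = N/(2*(2*(j:ℝ)-1)) := by
        field_simp; ring
      rw [heq] at hmul
      linarith
    have hS := Finset.sum_le_sum hbound
    have hsplit : ∑ j ∈ Finset.Ioc p r,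
        ((N/4)*(Real.log (2*(j:ℝ)+1) - Real.log (2*(j:ℝ)-1)) - (mR/2+1) - (2*(j:ℝ)-1)/4)
        = (N/4)*(Real.log (2*(r:ℝ)+1) - Real.log (2*(p:ℝ)+1))
          - ((r:ℝ)-(p:ℝ))*(mR/2+1) - ((r:ℝ)^2-(p:ℝ)^2)/4 := by
      have h1 : ∑ j ∈ Finset.Ioc p r, (2*(j:ℝ)-1) = (r:ℝ)^2 - (p:ℝ)^2 := by
        have := Finset.sum_Ioc_consecutive (fun j => (2*(j:ℝ)-1)) (Nat.zero_le p) hpr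
        rw [key2, key2] at this
        linarith
      rw [Finset.sum_sub_distrib, Finset.sum_sub_distrib, ← Finset.mul_sum,
        tele p r hpr, ← Finset.sum_div, h1, Finset.sum_const, Nat.card_Ioc, nsmul_eq_mul]
      rw [Nat.cast_sub hpr]
    linarith [hsplit ▸ hS]
  linarith [S2]

open Finset in
lemma card_lb (N mR : ℝ) (r : ℕ)
    (F : Finset (ℤ × ℤ))
    (hF : F = (Finset.Ioc 0 r).biUnion (fun j =>
      (Finset.Icc ((⌊mR/2 + (2*(j:ℝ)-1)/4⌋ : ℤ) + 1)
        ((⌈min (N/(2*(2*(j:ℝ)-1))) (3*(2*(j:ℝ)-1)/2 + mR)⌉ : ℤ) - 1)).image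
        (fun x => (x, 2*(j:ℤ)-1)))) :
    (F.card : ℝ) ≥ ∑ j ∈ Finset.Ioc 0 r,
      (min (N/(2*(2*(j:ℝ)-1))) (3*(2*(j:ℝ)-1)/2 + mR) - (mR/2 + (2*(j:ℝ)-1)/4) - 1) := by
  subst hF
  rw [Finset.card_biUnion]
  · push_cast
    apply Finset.sum_le_sum
    intro j hj
    set L : ℝ := mR/2 + (2*(j:ℝ)-1)/4
    set R : ℝ := min (N/(2*(2*(j:ℝ)-1))) (3*(2*(j:ℝ)-1)/2 + mR)
    rw [Finset.card_image_of_injective _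
      (fun x y h => by simpa [Prod.ext_iff] using h), Int.card_Icc]
    have h1 : ((((⌈R⌉ - 1) + 1 - (⌊L⌋ + 1) : ℤ)).toNat : ℝ) ≥ ((⌈R⌉ - 1 + 1 - (⌊L⌋ + 1) : ℤ) : ℝ) := by
      exact_mod_cast Int.self_le_toNat _
    have h2 : ((⌈R⌉ : ℤ) : ℝ) ≥ R := Int.le_ceil R
    have h3 : ((⌊L⌋ : ℤ) : ℝ) ≤ L := Int.floor_le L
    push_cast at h1 ⊢
    linarith
  · intro x hx y hy hxy
    simp only [Finset.disjoint_left]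
    intro q hq hq'
    simp only [Finset.mem_image] at hq hq'
    obtain ⟨u, _, rfl⟩ := hq
    obtain ⟨v, _, hv⟩ := hq'
    apply hxy
    have := (Prod.ext_iff.mp hv).2
    omega

lemma subset_lem (m : ℕ) (N mR : ℝ) (hmR : mR = (m:ℝ)) (hm : 1 ≤ m) (r : ℕ) :
    ↑((Finset.Ioc 0 r).biUnion (fun j =>
      (Finset.Icc ((⌊mR/2 + (2*(j:ℝ)-1)/4⌋ : ℤ) + 1)
        ((⌈min (N/(2*(2*(j:ℝ)-1))) (3*(2*(j:ℝ)-1)/2 + mR)⌉ : ℤ) - 1)).image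
        (fun x => (x, 2*(j:ℤ)-1)))) ⊆
    {q : ℤ × ℤ | ((q.1:ℝ)*(q.2:ℝ) < N/2 ∧ 2*(q.1:ℝ) - 3*(q.2:ℝ) < 2*(m:ℝ) ∧
      4*(q.1:ℝ) - (q.2:ℝ) > 2*(m:ℝ) ∧ (q.1:ℝ) > 0 ∧ (q.2:ℝ) > 0) ∧ Odd q.2} := by
  intro q hq
  simp only [Finset.coe_biUnion, Set.mem_iUnion, Finset.mem_coe, Finset.mem_image,
    Finset.mem_Ioc, Finset.mem_Icc] at hq
  obtain ⟨j, ⟨hj0, hjr⟩, x, ⟨hxlo, hxhi⟩, rfl⟩ := hq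
  set L : ℝ := mR/2 + (2*(j:ℝ)-1)/4 with hL
  set R : ℝ := min (N/(2*(2*(j:ℝ)-1))) (3*(2*(j:ℝ)-1)/2 + mR) with hR
  have hm1 : (1:ℝ) ≤ mR := by rw [hmR]; exact_mod_cast hm
  have hj1 : (1:ℝ) ≤ (j:ℝ) := by exact_mod_cast hj0
  have hy1 : (1:ℝ) ≤ 2*(j:ℝ)-1 := by linarith
  have hxL : L < (x:ℝ) := by
    have h1 : L < ((⌊L⌋ + 1 : ℤ) : ℝ) := by push_cast; exact Int.lt_floor_add_one L
    have h2 : ((⌊L⌋ + 1 : ℤ) : ℝ) ≤ (x:ℝ) := by exact_mod_cast hxlo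
    linarith
  have hxR : (x:ℝ) < R := by
    have h1 : ((⌈R⌉ - 1 : ℤ) : ℝ) < R := by
      have := Int.ceil_lt_add_one R
      push_cast; linarith
    have h2 : (x:ℝ) ≤ ((⌈R⌉ - 1 : ℤ) : ℝ) := by exact_mod_cast hxhi
    linarith
  have hxA : (x:ℝ) < N/(2*(2*(j:ℝ)-1)) := lt_of_lt_of_le hxR (min_le_left _ _)
  have hxB : (x:ℝ) < 3*(2*(j:ℝ)-1)/2 + mR := lt_of_lt_of_le hxR (min_le_right _ _)
  have hycast : ((2*(j:ℤ)-1 : ℤ) : ℝ) = 2*(j:ℝ)-1 := by push_cast; ring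
  refine ⟨⟨?_, ?_, ?_, ?_, ?_⟩, ⟨(j:ℤ)-1, by ring⟩⟩
  · show (x:ℝ) * ((2*(j:ℤ)-1 : ℤ) : ℝ) < N/2
    rw [hycast]
    have h2y : (0:ℝ) < 2*(2*(j:ℝ)-1) := by linarith
    have := (lt_div_iff₀ h2y).mp hxA
    nlinarith
  · show 2*(x:ℝ) - 3*((2*(j:ℤ)-1 : ℤ) : ℝ) < 2*(m:ℝ)
    rw [hycast, ← hmR]; linarith
  · show 4*(x:ℝ) - ((2*(j:ℤ)-1 : ℤ) : ℝ) > 2*(m:ℝ)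
    rw [hycast, ← hmR]
    rw [hL] at hxL
    linarith
  · show (x:ℝ) > 0
    rw [hL] at hxL
    linarith
  · show ((2*(j:ℤ)-1 : ℤ) : ℝ) > 0
    rw [hycast]; linarith

lemma fin_lem (m n : ℕ) (N : ℝ) (hN : N = (n:ℝ)+1) (hm : 1 ≤ m) :
    {q : ℤ × ℤ | ((q.1:ℝ)*(q.2:ℝ) < N/2 ∧ 2*(q.1:ℝ) - 3*(q.2:ℝ) < 2*(m:ℝ) ∧
      4*(q.1:ℝ) - (q.2:ℝ) > 2*(m:ℝ) ∧ (q.1:ℝ) > 0 ∧ (q.2:ℝ) > 0) ∧ Odd q.2}.Finite := by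
  apply Set.Finite.subset (Set.finite_Icc ((1:ℤ),(1:ℤ)) ((n:ℤ),(n:ℤ)))
  rintro ⟨x, y⟩ ⟨⟨h1, h2, h3, h4, h5⟩, -⟩
  simp only [Set.mem_Icc, Prod.mk_le_mk]
  have hm1 : (1:ℝ) ≤ (m:ℝ) := by exact_mod_cast hm
  have hy1 : (1:ℤ) ≤ y := by exact_mod_cast Int.cast_pos.mp (by exact_mod_cast h5)
  have hy1' : (1:ℝ) ≤ (y:ℝ) := by exact_mod_cast hy1
  have hx1 : (1:ℤ) ≤ x := by
    by_contra h
    push_neg at h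
    have hx0 : x ≤ 0 := by omega
    have : (x:ℝ) ≤ 0 := by exact_mod_cast hx0
    linarith
  have hx1' : (1:ℝ) ≤ (x:ℝ) := by exact_mod_cast hx1
  have hxn : (x:ℝ) < (n:ℝ) + 1 := by nlinarith [hN ▸ h1]
  have hyn : (y:ℝ) < (n:ℝ) + 1 := by nlinarith [hN ▸ h1]
  refine ⟨⟨hx1, hy1⟩, ⟨?_, ?_⟩⟩
  · exact_mod_cast Int.lt_add_one_iff.mp (by exact_mod_cast hxn)
  · exact_mod_cast Int.lt_add_one_iff.mp (by exact_mod_cast hyn)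

lemma ab_lemma (a b m N : ℝ) (ha : a*(3*a+2*m) = N) (hb : b*(b+2*m) = 2*N)
    (ha0 : 0 < a) (hb0 : 0 < b) (hm0 : 0 < m) : a < b := by
  nlinarith [mul_pos ha0 hm0, mul_pos ha0 ha0, (by linarith : (0:ℝ) < a + b + 2*m)]

lemma ba_lemma (a b m N : ℝ) (ha : a*(3*a+2*m) = N) (hb : b*(b+2*m) = 2*N)
    (ha0 : 0 < a) (hb0 : 0 < b) (hm0 : 0 < m) : b ≤ (5/2)*a := by
  nlinarith [mul_pos ha0 hm0, mul_pos ha0 ha0, (by linarith : (0:ℝ) < b + (5/2)*a)]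

set_option maxHeartbeats 1000000 in
/-- Let `m ≥ 1` and `n ≥ 0` be integers, set `t = (n+1)/m²`, let
`Ω' = {(x,y) ∈ ℝ² : xy < (n+1)/2, 2x - 3y < 2m, 4x - y > 2m, x > 0, y > 0}`, and let
`M₂^(m)(n)` be the number of lattice points (points of `ℤ²`) in `Ω'` whose `y`-coordinate
is odd.  Then
`M₂^(m)(n) > (1/4)(n+1)(1/(√(1+3t)+1) - 1/(√(1+2t)+1) + log(2(√(1+3t)+1)/(√(1+2t)+1)))
- 3.7√(n+1) - m - 1`. -/
theorem stmt8 (m n : ℕ) (hm : 1 ≤ m) (t : ℝ) (ht : t = ((n : ℝ) + 1) / (m : ℝ) ^ 2)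
    (Ω' : Set (ℝ × ℝ))
    (hΩ' : Ω' = {P : ℝ × ℝ | P.1 * P.2 < ((n : ℝ) + 1) / 2 ∧
      2 * P.1 - 3 * P.2 < 2 * (m : ℝ) ∧ 4 * P.1 - P.2 > 2 * (m : ℝ) ∧ P.1 > 0 ∧ P.2 > 0})
    (M2 : ℕ) (hM2 : M2 = Set.ncard {p : ℤ × ℤ | ((p.1 : ℝ), (p.2 : ℝ)) ∈ Ω' ∧ Odd p.2}) :
    (M2 : ℝ) > (1 / 4) * ((n : ℝ) + 1) *
        (1 / (Real.sqrt (1 + 3 * t) + 1) - 1 / (Real.sqrt (1 + 2 * t) + 1)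
          + Real.log (2 * (Real.sqrt (1 + 3 * t) + 1) / (Real.sqrt (1 + 2 * t) + 1)))
      - 3.7 * Real.sqrt ((n : ℝ) + 1) - (m : ℝ) - 1 := by
  classical
  simp only [hΩ', Set.mem_setOf_eq] at hM2
  have hm1 : (1:ℝ) ≤ (m:ℝ) := by exact_mod_cast hm
  have hm0 : (0:ℝ) < (m:ℝ) := by linarith
  set N : ℝ := (n:ℝ) + 1 with hNdef
  have hN1 : (1:ℝ) ≤ N := by
    have : (0:ℝ) ≤ (n:ℝ) := Nat.cast_nonneg n
    rw [hNdef]; linarith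
  have hN0 : (0:ℝ) < N := by linarith
  set s : ℝ := Real.sqrt N with hsdef
  have hs2 : s^2 = N := Real.sq_sqrt (le_of_lt hN0)
  have hs0 : (0:ℝ) ≤ s := Real.sqrt_nonneg N
  have hs1 : (1:ℝ) ≤ s := by
    have h := Real.sqrt_le_sqrt hN1
    rwa [Real.sqrt_one] at h
  set w : ℝ := Real.sqrt ((m:ℝ)^2 + 3*N) with hwdef
  set z : ℝ := Real.sqrt ((m:ℝ)^2 + 2*N) with hzdef
  have hw2 : w^2 = (m:ℝ)^2 + 3*N := Real.sq_sqrt (by positivity)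
  have hz2 : z^2 = (m:ℝ)^2 + 2*N := Real.sq_sqrt (by positivity)
  have hw0 : (0:ℝ) ≤ w := Real.sqrt_nonneg _
  have hz0 : (0:ℝ) ≤ z := Real.sqrt_nonneg _
  have hwm : (0:ℝ) < w + (m:ℝ) := by linarith
  have hzm : (0:ℝ) < z + (m:ℝ) := by linarith
  set a : ℝ := N / (w + (m:ℝ)) with hadef
  set b : ℝ := 2*N / (z + (m:ℝ)) with hbdef
  have ha0 : 0 < a := div_pos hN0 hwm
  have hb0 : 0 < b := div_pos (by linarith) hzm
  have haX : a * (w+(m:ℝ)) = N := by rw [hadef]; exact div_mul_cancel₀ N hwm.ne'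
  have hw2' : (w+(m:ℝ))^2 = 3*N + 2*(m:ℝ)*(w+(m:ℝ)) := by linear_combination hw2
  have ha : a*(3*a+2*(m:ℝ)) = N := by
    have h3 : a*(3*a+2*(m:ℝ)) * ((w+(m:ℝ))*(w+(m:ℝ))) = N * ((w+(m:ℝ))*(w+(m:ℝ))) := by
      linear_combination (3*(a*(w+(m:ℝ))+N) + 2*(m:ℝ)*(w+(m:ℝ))) * haX - N * hw2'
    exact mul_right_cancel₀ (mul_ne_zero hwm.ne' hwm.ne') h3
  have hbX : b * (z+(m:ℝ)) = 2*N := by rw [hbdef]; exact div_mul_cancel₀ (2*N) hzm.ne'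
  have hz2' : (z+(m:ℝ))^2 = 2*N + 2*(m:ℝ)*(z+(m:ℝ)) := by linear_combination hz2
  have hb : b*(b+2*(m:ℝ)) = 2*N := by
    have h3 : b*(b+2*(m:ℝ)) * ((z+(m:ℝ))*(z+(m:ℝ))) = 2*N * ((z+(m:ℝ))*(z+(m:ℝ))) := by
      linear_combination (b*(z+(m:ℝ))+2*N + 2*(m:ℝ)*(z+(m:ℝ))) * hbX - 2*N * hz2'
    exact mul_right_cancel₀ (mul_ne_zero hzm.ne' hzm.ne') h3
  have ht0 : (0:ℝ) ≤ t := by rw [ht]; positivity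
  have hu : Real.sqrt (1+3*t) = w/(m:ℝ) := by
    have h1 : (w/(m:ℝ))^2 = 1+3*t := by
      rw [ht]; field_simp; linear_combination hw2
    rw [← h1, Real.sqrt_sq (by positivity)]
  have hv : Real.sqrt (1+2*t) = z/(m:ℝ) := by
    have h1 : (z/(m:ℝ))^2 = 1+2*t := by
      rw [ht]; field_simp; linear_combination hz2
    rw [← h1, Real.sqrt_sq (by positivity)]
  have hsum1 : 1/(Real.sqrt (1+3*t)+1) = (m:ℝ)*a/N := by
    rw [hu, hadef]
    field_simp
  have hsum2 : 1/(Real.sqrt (1+2*t)+1) = (m:ℝ)*b/(2*N) := by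
    rw [hv, hbdef]
    field_simp
  have hlarg : 2*(Real.sqrt (1+3*t)+1)/(Real.sqrt (1+2*t)+1) = b/a := by
    rw [hu, hv, hadef, hbdef]
    rw [div_div_div_eq]
    field_simp
  have hlog : Real.log (2*(Real.sqrt (1+3*t)+1)/(Real.sqrt (1+2*t)+1))
      = Real.log b - Real.log a := by
    rw [hlarg, Real.log_div hb0.ne' ha0.ne']
  rw [hsum1, hsum2, hlog]
  have hRHS : (1/4)*N*((m:ℝ)*a/N - (m:ℝ)*b/(2*N) + (Real.log b - Real.log a))
      = (m:ℝ)*a/4 - (m:ℝ)*b/8 + (N/4)*(Real.log b - Real.log a) := by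
    field_simp
    ring
  rw [hRHS]
  have hma : 2*a*(m:ℝ) = N - 3*a^2 := by linear_combination ha
  have hmb : 2*b*(m:ℝ) = 2*N - b^2 := by linear_combination hb
  set p : ℕ := Nat.floor ((a+1)/2) with hpdef
  set r : ℕ := Nat.floor ((b+1)/2) with hrdef
  have hpa : 2*(p:ℝ) ≤ a + 1 := by
    have := Nat.floor_le (by positivity : (0:ℝ) ≤ (a+1)/2)
    rw [← hpdef] at this
    linarith
  have hpa' : a < 2*(p:ℝ)+1 := by
    have := Nat.lt_floor_add_one ((a+1)/2)
    rw [← hpdef] at this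
    linarith
  have hrb : 2*(r:ℝ) ≤ b + 1 := by
    have := Nat.floor_le (by positivity : (0:ℝ) ≤ (b+1)/2)
    rw [← hrdef] at this
    linarith
  have hrb' : b < 2*(r:ℝ)+1 := by
    have := Nat.lt_floor_add_one ((b+1)/2)
    rw [← hrdef] at this
    linarith
  have hab : a < b := ab_lemma a b (m:ℝ) N ha hb ha0 hb0 hm0
  have hpr : p ≤ r := Nat.floor_mono (by linarith)
  by_cases hp : 1 ≤ p
  · -- main case
    set F : Finset (ℤ × ℤ) := (Finset.Ioc 0 r).biUnion (fun j =>
      (Finset.Icc ((⌊(m:ℝ)/2 + (2*(j:ℝ)-1)/4⌋ : ℤ) + 1)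
        ((⌈min (N/(2*(2*(j:ℝ)-1))) (3*(2*(j:ℝ)-1)/2 + (m:ℝ))⌉ : ℤ) - 1)).image
        (fun x => (x, 2*(j:ℤ)-1))) with hFdef
    have hle1 : (F.card : ℝ) ≤ (M2:ℝ) := by
      have h2 := fin_lem m n N hNdef hm
      have h1 := subset_lem m N (m:ℝ) rfl hm r
      rw [← hFdef] at h1
      have h3 := Set.ncard_le_ncard h1 h2
      rw [Set.ncard_coe_finset] at h3
      rw [hM2]
      exact_mod_cast h3
    have hle2 := card_lb N (m:ℝ) r F hFdef
    have hle3 := sum_est N (m:ℝ) a p r hp hpr hN0 hm1 ha0 ha (by linarith) hpa'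
    have hconv : Real.log b - Real.log a - (2*(p:ℝ)+1-a)/a
        ≤ Real.log (2*(r:ℝ)+1) - Real.log (2*(p:ℝ)+1) := by
      have hp0 : (0:ℝ) < 2*(p:ℝ)+1 := by positivity
      have h1 : Real.log b ≤ Real.log (2*(r:ℝ)+1) :=
        Real.log_le_log hb0 (by linarith)
      have h2 : Real.log (2*(p:ℝ)+1) - Real.log a ≤ (2*(p:ℝ)+1-a)/a := by
        rw [← Real.log_div hp0.ne' ha0.ne']
        have h3 := Real.log_le_sub_one_of_pos (div_pos hp0 ha0)
        have h4 : (2*(p:ℝ)+1)/a - 1 = (2*(p:ℝ)+1-a)/a := by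
          field_simp
        linarith
      linarith
    have hmulc : (N/4)*(Real.log b - Real.log a - (2*(p:ℝ)+1-a)/a)
        ≤ (N/4)*(Real.log (2*(r:ℝ)+1) - Real.log (2*(p:ℝ)+1)) :=
      mul_le_mul_of_nonneg_left hconv (by linarith)
    have hdiva : (N/4)*((2*(p:ℝ)+1-a)/a) = (2*(p:ℝ)+1-a)*(3*a+2*(m:ℝ))/4 := by
      rw [ha.symm]
      field_simp
    have hkey := key (m:ℝ) a b s p r hm1 hp hpr (by linarith) hpa'
      (by linarith) hrb' (by rw [hs2]; exact ha) (by rw [hs2]; exact hb) hb0 hs1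
    have hexp : (N/4)*(Real.log b - Real.log a - (2*(p:ℝ)+1-a)/a)
        = (N/4)*(Real.log b - Real.log a) - (N/4)*((2*(p:ℝ)+1-a)/a) := by ring
    rw [hexp, hdiva] at hmulc
    linarith [hle1, hle2, hle3, hmulc, hkey, hma, hmb]
  · -- trivial case : p = 0, a < 1
    have hp0 : p = 0 := by omega
    have ha1 : a < 1 := by
      rw [hp0] at hpa'
      push_cast at hpa'
      linarith
    have hba : b ≤ (5/2)*a := ba_lemma a b (m:ℝ) N ha hb ha0 hb0 hm0
    have hlg : Real.log b - Real.log a ≤ 3/2 := by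
      rw [← Real.log_div hb0.ne' ha0.ne']
      have h1 := Real.log_le_sub_one_of_pos (div_pos hb0 ha0)
      have h2 : b/a ≤ 5/2 := (div_le_iff₀ ha0).mpr (by linarith)
      linarith
    have hmul2 : (N/4)*(Real.log b - Real.log a) ≤ (N/4)*(3/2) :=
      mul_le_mul_of_nonneg_left hlg (by linarith)
    have hM20 : (0:ℝ) ≤ (M2:ℝ) := Nat.cast_nonneg M2
    have haa : a^2 ≤ 1 := by
      rw [sq]
      exact mul_le_one₀ ha1.le ha0.le ha1.le
    have hmam : (m:ℝ)*a ≤ (m:ℝ) := mul_le_of_le_one_right hm0.le ha1.le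
    have hmbm : (0:ℝ) ≤ (m:ℝ)*b := by positivity
    linarith [hM20, hmul2, hma, hmb, hmam, hmbm, haa]
end

section
/- Let m >= 0 and n >= 1 be integers and write n = 2^e * N with e >= 0 an integer and N an odd positive integer. Then Z^(m)(n) = #B1 - #A2, where A2 = { (d1,d2) in N^2 : d1*d2 = N and d2 - 2^{e+1}*d1 is odd and >= 2m+1 } and B1 = { (d1,d2) in N^2 : d1*d2 = N and 2^{e+1}*d2 - d1 is odd and >= 2m+1 }; moreover #B1 >= #A2, and consequently Z^(m)(n) >= 0. -/
lemma odd_of_dvd_odd {d N : ℕ} (h : d ∣ N) (hN : Odd N) : Odd d := by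
  rcases Nat.even_or_odd d with he | ho
  · exact absurd (he.two_dvd.trans h) (by rw [Nat.odd_iff] at hN; omega)
  · exact ho

lemma cond_iff (m n k : ℕ) :
    (k * (k + 1) / 2 + m * k ≤ n ∧ k ∣ n - (k * (k + 1) / 2 + m * k)) ↔
      ∃ j, 2 * n = k * ((k + 1) + 2 * (m + j)) := by
  have h2 : 2 * (k * (k + 1) / 2) = k * (k + 1) :=
    Nat.mul_div_cancel' (Nat.even_mul_succ_self k).two_dvd
  constructor
  · rintro ⟨hT, j, hj⟩
    refine ⟨j, ?_⟩
    have hn' : 2 * n = k * (k + 1) + 2 * (m * k) + 2 * (k * j) := by omega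
    rw [hn']; ring
  · rintro ⟨j, hj⟩
    have hexp : k * ((k + 1) + 2 * (m + j)) = k * (k + 1) + 2 * (m * k) + 2 * (k * j) := by
      ring
    rw [hexp] at hj
    exact ⟨by omega, j, by omega⟩


/-- Let `m ≥ 0` and `n ≥ 1` be integers, write `n = 2^e · N` with `N` odd,
and let `Z^(m)` (defined for `n ≥ 1`) be given by the identity
`∑_{n ≥ 1} Z^(m)(n) q^n = -∑_{k≥1} (-1)^k q^{k(k+1)/2+mk}/(1-q^k)`. Then
`Z^(m)(n) = #B₁ - #A₂`, where (as subsets of pairs of positive integers)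
`A₂ = {(d₁,d₂) : d₁d₂ = N, d₂ - 2^{e+1} d₁ odd and ≥ 2m+1}` and
`B₁ = {(d₁,d₂) : d₁d₂ = N, 2^{e+1} d₂ - d₁ odd and ≥ 2m+1}`; one has `#B₁ ≥ #A₂`, and
consequently `Z^(m)(n) ≥ 0`. -/
theorem stmt10 (m : ℕ) (Z : ℕ → ℤ)
    (hZ : PowerSeries.mk (fun n => if n = 0 then 0 else Z n) = -(seriesB m))
    (n : ℕ) (hn : 1 ≤ n) (e N : ℕ) (hN : Odd N) (hne : n = 2 ^ e * N) :
    Z n =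
      (Set.ncard {p : ℕ × ℕ | 0 < p.1 ∧ 0 < p.2 ∧ p.1 * p.2 = N ∧
          Odd (2 ^ (e + 1) * (p.2 : ℤ) - (p.1 : ℤ)) ∧
          2 * (m : ℤ) + 1 ≤ 2 ^ (e + 1) * (p.2 : ℤ) - (p.1 : ℤ)} : ℤ)
      - (Set.ncard {p : ℕ × ℕ | 0 < p.1 ∧ 0 < p.2 ∧ p.1 * p.2 = N ∧
          Odd ((p.2 : ℤ) - 2 ^ (e + 1) * (p.1 : ℤ)) ∧
          2 * (m : ℤ) + 1 ≤ (p.2 : ℤ) - 2 ^ (e + 1) * (p.1 : ℤ)} : ℤ)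
    ∧ Set.ncard {p : ℕ × ℕ | 0 < p.1 ∧ 0 < p.2 ∧ p.1 * p.2 = N ∧
          Odd ((p.2 : ℤ) - 2 ^ (e + 1) * (p.1 : ℤ)) ∧
          2 * (m : ℤ) + 1 ≤ (p.2 : ℤ) - 2 ^ (e + 1) * (p.1 : ℤ)}
        ≤ Set.ncard {p : ℕ × ℕ | 0 < p.1 ∧ 0 < p.2 ∧ p.1 * p.2 = N ∧
          Odd (2 ^ (e + 1) * (p.2 : ℤ) - (p.1 : ℤ)) ∧
          2 * (m : ℤ) + 1 ≤ 2 ^ (e + 1) * (p.2 : ℤ) - (p.1 : ℤ)}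
    ∧ 0 ≤ Z n := by
  classical
  have hN0 : N ≠ 0 := by rintro rfl; simp at hN
  have hNn : N ≤ n := by
    rw [hne]
    calc N = 1 * N := (one_mul N).symm
      _ ≤ 2 ^ e * N := Nat.mul_le_mul_right N Nat.one_le_two_pow
  have h2n : 2 * n = 2 ^ (e + 1) * N := by rw [hne]; ring
  set T : ℕ → ℕ := fun k => k * (k + 1) / 2 + m * k with hT
  have hcoeff : Z n = ∑ k ∈ Finset.Icc 1 n,
      (if T k ≤ n ∧ k ∣ n - T k then (-1 : ℤ) ^ (k + 1) else 0) := by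
    have := congrArg (PowerSeries.coeff (R := ℤ) n) hZ
    rw [PowerSeries.coeff_mk, map_neg] at this
    have hn0 : n ≠ 0 := by omega
    rw [if_neg hn0] at this
    rw [this, seriesB, PowerSeries.coeff_mk, ← Finset.sum_neg_distrib]
    apply Finset.sum_congr rfl
    intro k hk
    have hre : (PowerSeries.C (R := ℤ) ((-1) ^ k) * PowerSeries.X ^ (k * (k + 1) / 2 + m * k) *
        geomSer k) = (geomSer k * PowerSeries.X ^ (k * (k + 1) / 2 + m * k)) *
        PowerSeries.C (R := ℤ) ((-1) ^ k) := by ring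
    rw [hre, PowerSeries.coeff_mul_C, PowerSeries.coeff_mul_X_pow', geomSer,
      PowerSeries.coeff_mk]
    by_cases h1 : T k ≤ n
    · by_cases h2 : k ∣ n - T k
      · simp only [hT] at h1 h2 ⊢; simp [h1, h2, pow_succ]
      · simp only [hT] at h1 h2 ⊢; simp [h1, h2]
    · simp only [hT] at h1 ⊢; simp [h1]
  set K : Finset ℕ := (Finset.Icc 1 n).filter (fun k => ∃ j, 2 * n = k * ((k + 1) + 2 * (m + j)))
    with hK
  have hZK : Z n = ∑ k ∈ K, (-1 : ℤ) ^ (k + 1) := by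
    rw [hcoeff, hK, Finset.sum_filter]
    apply Finset.sum_congr rfl
    intro k hk
    by_cases h : T k ≤ n ∧ k ∣ n - T k
    · rw [if_pos h, if_pos ((cond_iff m n k).mp h)]
    · rw [if_neg h, if_neg (fun hc => h ((cond_iff m n k).mpr hc))]
  set Kodd := K.filter (fun k => Odd k) with hKodd
  set Keven := K.filter (fun k => ¬ Odd k) with hKeven
  have hsplit : Z n = (Kodd.card : ℤ) - (Keven.card : ℤ) := by
    rw [hZK, ← Finset.sum_filter_add_sum_filter_not K (fun k => Odd k)]
    have h1 : ∑ k ∈ Kodd, (-1 : ℤ) ^ (k + 1) = (Kodd.card : ℤ) := by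
      rw [Finset.sum_congr rfl (g := fun _ => (1 : ℤ))
        (fun k hk => Even.neg_one_pow ((Finset.mem_filter.mp hk).2.add_one)),
        Finset.sum_const, nsmul_eq_mul, mul_one]
    have h2 : ∑ k ∈ Keven, (-1 : ℤ) ^ (k + 1) = -(Keven.card : ℤ) := by
      rw [Finset.sum_congr rfl (g := fun _ => (-1 : ℤ)) (fun k hk => Odd.neg_one_pow ?_),
        Finset.sum_const, nsmul_eq_mul, mul_neg_one]
      have hke : ¬ Odd k := (Finset.mem_filter.mp hk).2
      rw [Nat.not_odd_iff_even] at hke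
      exact hke.add_one
    rw [h1, h2]; ring
  set B : Finset (ℕ × ℕ) := (Nat.divisorsAntidiagonal N).filter
    (fun p => 2 * (m : ℤ) + 1 ≤ 2 ^ (e + 1) * (p.2 : ℤ) - (p.1 : ℤ)) with hB
  set A : Finset (ℕ × ℕ) := (Nat.divisorsAntidiagonal N).filter
    (fun p => 2 * (m : ℤ) + 1 ≤ (p.2 : ℤ) - 2 ^ (e + 1) * (p.1 : ℤ)) with hA
  -- bijection Kodd ≃ B
  have hcardB : Kodd.card = B.card := by
    apply Finset.card_nbij' (fun k => (k, N / k)) (fun p => p.1)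
    · intro k hk
      obtain ⟨hkK, hkodd⟩ := Finset.mem_filter.mp hk
      obtain ⟨hkI, j, hj⟩ := Finset.mem_filter.mp hkK
      have hk1 : 1 ≤ k := (Finset.mem_Icc.mp hkI).1
      have hkdvdN : k ∣ N := by
        have hcop : k.Coprime (2 ^ (e + 1)) := by
          apply Nat.Coprime.pow_right
          have : ¬ 2 ∣ k := by rw [Nat.odd_iff] at hkodd; omega
          exact ((Nat.prime_two.coprime_iff_not_dvd).mpr this).symm
        exact hcop.dvd_of_dvd_mul_left (h2n ▸ ⟨_, hj⟩)
      have hmul : k * (N / k) = N := Nat.mul_div_cancel' hkdvdN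
      have hd : 2 ^ (e + 1) * (N / k) = (k + 1) + 2 * (m + j) := by
        refine Nat.eq_of_mul_eq_mul_left (show 0 < k by omega) ?_
        calc k * (2 ^ (e + 1) * (N / k)) = 2 ^ (e + 1) * (k * (N / k)) := by ring
          _ = 2 ^ (e + 1) * N := by rw [hmul]
          _ = 2 * n := h2n.symm
          _ = k * ((k + 1) + 2 * (m + j)) := hj
      have hdz : (2 : ℤ) ^ (e + 1) * ((N / k : ℕ) : ℤ) = (k : ℤ) + 1 + 2 * (m + j) := by
        exact_mod_cast congrArg (Nat.cast : ℕ → ℤ) hd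
      rw [hB, Finset.mem_coe, Finset.mem_filter, Nat.mem_divisorsAntidiagonal]
      exact ⟨⟨hmul, hN0⟩, by simp only []; linarith⟩
    · intro p hp
      obtain ⟨hpd, hple⟩ := Finset.mem_filter.mp hp
      obtain ⟨hpmul, _⟩ := Nat.mem_divisorsAntidiagonal.mp hpd
      have hp1 : 0 < p.1 := Nat.pos_of_ne_zero (fun h => hN0 (by rw [← hpmul, h, zero_mul]))
      have hp2 : 0 < p.2 := Nat.pos_of_ne_zero (fun h => hN0 (by rw [← hpmul, h, mul_zero]))
      have hd1 : p.1 ∣ N := ⟨p.2, hpmul.symm⟩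
      have hodd1 : Odd p.1 := odd_of_dvd_odd hd1 hN
      refine Finset.mem_filter.mpr ⟨Finset.mem_filter.mpr ⟨Finset.mem_Icc.mpr
        ⟨hp1, le_trans (Nat.le_of_dvd (Nat.pos_of_ne_zero hN0) hd1) hNn⟩, ?_⟩, hodd1⟩
      set D := 2 ^ (e + 1) * p.2 with hD
      have hD2 : 2 * n = p.1 * D := by rw [h2n, ← hpmul, hD]; ring
      obtain ⟨c, hc⟩ : ∃ c, D = 2 * c := ⟨2 ^ e * p.2, by rw [hD, pow_succ]; ring⟩
      obtain ⟨t, ht⟩ := hodd1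
      have hDz : ((D : ℕ) : ℤ) = 2 ^ (e + 1) * (p.2 : ℤ) := by rw [hD]; push_cast; ring
      have hple' : p.1 + 2 * m + 1 ≤ D := by
        have : (p.1 : ℤ) + 2 * m + 1 ≤ (D : ℤ) := by rw [hDz]; linarith
        exact_mod_cast this
      obtain ⟨j, hjD⟩ : ∃ j, D = (p.1 + 1) + 2 * (m + j) :=
        ⟨(D - p.1 - 1) / 2 - m, by omega⟩
      exact ⟨j, by rw [hD2, hjD]⟩
    · intro k hk; rfl
    · intro p hp
      obtain ⟨hpd, _⟩ := Finset.mem_filter.mp hp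
      obtain ⟨hpmul, _⟩ := Nat.mem_divisorsAntidiagonal.mp hpd
      have hp1 : 0 < p.1 := Nat.pos_of_ne_zero (fun h => hN0 (by rw [← hpmul, h, zero_mul]))
      have : N / p.1 = p.2 := by rw [← hpmul, Nat.mul_div_cancel_left _ hp1]
      exact Prod.ext rfl this
  -- bijection A ≃ Keven
  have hcardA : A.card = Keven.card := by
    apply Finset.card_nbij' (fun p => 2 ^ (e + 1) * p.1) (fun k => (N / (2 * n / k), 2 * n / k))
    · intro p hp
      obtain ⟨hpd, hple⟩ := Finset.mem_filter.mp hp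
      obtain ⟨hpmul, _⟩ := Nat.mem_divisorsAntidiagonal.mp hpd
      have hp1 : 0 < p.1 := Nat.pos_of_ne_zero (fun h => hN0 (by rw [← hpmul, h, zero_mul]))
      have hp2 : 0 < p.2 := Nat.pos_of_ne_zero (fun h => hN0 (by rw [← hpmul, h, mul_zero]))
      have hdvd2 : p.2 ∣ N := ⟨p.1, by rw [← hpmul]; ring⟩
      obtain ⟨s, hs⟩ := odd_of_dvd_odd hdvd2 hN
      obtain ⟨k, hk⟩ : ∃ k, k = 2 ^ (e + 1) * p.1 := ⟨_, rfl⟩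
      have hkD : 2 * n = k * p.2 := by rw [h2n, ← hpmul, hk]; ring
      obtain ⟨c, hc⟩ : ∃ c, k = 2 * c := ⟨2 ^ e * p.1, by rw [hk, pow_succ]; ring⟩
      have hkz : ((k : ℕ) : ℤ) = 2 ^ (e + 1) * (p.1 : ℤ) := by rw [hk]; push_cast; ring
      have hple' : k + 2 * m + 1 ≤ p.2 := by
        have h' : (k : ℤ) + 2 * m + 1 ≤ (p.2 : ℤ) := by rw [hkz]; linarith
        exact_mod_cast h'
      have hk1 : 1 ≤ k := by
        have hpos : 0 < k := by rw [hk]; positivity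
        omega
      have hkn : k ≤ n := by
        have h2 : k * 2 ≤ k * p.2 := Nat.mul_le_mul_left k (by omega)
        omega
      have hkeven : ¬ Odd k := by
        rw [Nat.not_odd_iff_even]; exact ⟨c, by omega⟩
      beta_reduce
      rw [← hk]
      refine Finset.mem_filter.mpr ⟨Finset.mem_filter.mpr ⟨Finset.mem_Icc.mpr
        ⟨hk1, hkn⟩, ?_⟩, hkeven⟩
      obtain ⟨j, hjD⟩ : ∃ j, p.2 = (k + 1) + 2 * (m + j) :=
        ⟨(p.2 - k - 1) / 2 - m, by omega⟩
      exact ⟨j, by rw [hkD, hjD]⟩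
    · intro k hk
      obtain ⟨hkK, hkeven⟩ := Finset.mem_filter.mp hk
      obtain ⟨hkI, j, hj⟩ := Finset.mem_filter.mp hkK
      have hk1 : 1 ≤ k := (Finset.mem_Icc.mp hkI).1
      set d := (k + 1) + 2 * (m + j) with hd
      have hdn : 2 * n / k = d := by rw [hj]; exact Nat.mul_div_cancel_left _ (by omega)
      have hdodd : Odd d := by
        rw [Nat.not_odd_iff_even] at hkeven
        obtain ⟨c, hc⟩ := hkeven
        exact ⟨c + m + j, by omega⟩
      have hddvdN : d ∣ N := by
        have hcop : d.Coprime (2 ^ (e + 1)) := by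
          apply Nat.Coprime.pow_right
          have : ¬ 2 ∣ d := by rw [Nat.odd_iff] at hdodd; omega
          exact ((Nat.prime_two.coprime_iff_not_dvd).mpr this).symm
        exact hcop.dvd_of_dvd_mul_left (h2n ▸ ⟨k, by rw [hj]; ring⟩)
      have hmul : (N / d) * d = N := Nat.div_mul_cancel hddvdN
      have hkd : 2 ^ (e + 1) * (N / d) = k := by
        have hd0 : 0 < d := by omega
        refine Nat.eq_of_mul_eq_mul_right hd0 ?_
        calc 2 ^ (e + 1) * (N / d) * d = 2 ^ (e + 1) * ((N / d) * d) := by ring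
          _ = 2 ^ (e + 1) * N := by rw [hmul]
          _ = 2 * n := h2n.symm
          _ = k * d := hj
      beta_reduce
      rw [hdn]
      refine Finset.mem_filter.mpr ⟨Nat.mem_divisorsAntidiagonal.mpr ⟨hmul, hN0⟩, ?_⟩
      have hkz : ((k : ℕ) : ℤ) = 2 ^ (e + 1) * ((N / d : ℕ) : ℤ) := by
        exact_mod_cast congrArg (Nat.cast : ℕ → ℤ) hkd.symm
      have hdz : ((d : ℕ) : ℤ) = (k : ℤ) + 1 + 2 * (m + j) := by
        rw [hd]; push_cast; ring
      simp only []
      rw [← hkz] at *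
      push_cast
      omega
    · intro p hp
      obtain ⟨hpd, _⟩ := Finset.mem_filter.mp hp
      obtain ⟨hpmul, _⟩ := Nat.mem_divisorsAntidiagonal.mp hpd
      have hp1 : 0 < p.1 := Nat.pos_of_ne_zero (fun h => hN0 (by rw [← hpmul, h, zero_mul]))
      have hp2 : 0 < p.2 := Nat.pos_of_ne_zero (fun h => hN0 (by rw [← hpmul, h, mul_zero]))
      have hkD : 2 * n = (2 ^ (e + 1) * p.1) * p.2 := by rw [h2n, ← hpmul]; ring
      have h1 : 2 * n / (2 ^ (e + 1) * p.1) = p.2 := by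
        rw [hkD]; exact Nat.mul_div_cancel_left _ (by positivity)
      have h2 : N / p.2 = p.1 := by rw [← hpmul, Nat.mul_div_cancel _ hp2]
      beta_reduce
      rw [h1, h2]
    · intro k hk
      obtain ⟨hkK, hkeven⟩ := Finset.mem_filter.mp hk
      obtain ⟨hkI, j, hj⟩ := Finset.mem_filter.mp hkK
      have hk1 : 1 ≤ k := (Finset.mem_Icc.mp hkI).1
      set d := (k + 1) + 2 * (m + j) with hd
      have hdn : 2 * n / k = d := by rw [hj]; exact Nat.mul_div_cancel_left _ (by omega)
      have hdodd : Odd d := by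
        rw [Nat.not_odd_iff_even] at hkeven
        obtain ⟨c, hc⟩ := hkeven
        exact ⟨c + m + j, by omega⟩
      have hddvdN : d ∣ N := by
        have hcop : d.Coprime (2 ^ (e + 1)) := by
          apply Nat.Coprime.pow_right
          have : ¬ 2 ∣ d := by rw [Nat.odd_iff] at hdodd; omega
          exact ((Nat.prime_two.coprime_iff_not_dvd).mpr this).symm
        exact hcop.dvd_of_dvd_mul_left (h2n ▸ ⟨k, by rw [hj]; ring⟩)
      have hmul : (N / d) * d = N := Nat.div_mul_cancel hddvdN
      have hkd : 2 ^ (e + 1) * (N / d) = k := by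
        have hd0 : 0 < d := by omega
        refine Nat.eq_of_mul_eq_mul_right hd0 ?_
        calc 2 ^ (e + 1) * (N / d) * d = 2 ^ (e + 1) * ((N / d) * d) := by ring
          _ = 2 ^ (e + 1) * N := by rw [hmul]
          _ = 2 * n := h2n.symm
          _ = k * d := hj
      simp only [hdn, hkd]
  -- identify the sets with the finsets
  have hBset : {p : ℕ × ℕ | 0 < p.1 ∧ 0 < p.2 ∧ p.1 * p.2 = N ∧
      Odd (2 ^ (e + 1) * (p.2 : ℤ) - (p.1 : ℤ)) ∧
      2 * (m : ℤ) + 1 ≤ 2 ^ (e + 1) * (p.2 : ℤ) - (p.1 : ℤ)} = ↑B := by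
    ext p
    simp only [Set.mem_setOf_eq, Finset.coe_filter, hB, Nat.mem_divisorsAntidiagonal,
      Set.mem_setOf_eq]
    constructor
    · rintro ⟨h1, h2, h3, h4, h5⟩; exact ⟨⟨h3, hN0⟩, h5⟩
    · rintro ⟨⟨h3, _⟩, h5⟩
      have hp1 : 0 < p.1 := Nat.pos_of_ne_zero (fun h => hN0 (by rw [← h3, h, zero_mul]))
      have hp2 : 0 < p.2 := Nat.pos_of_ne_zero (fun h => hN0 (by rw [← h3, h, mul_zero]))
      obtain ⟨t, ht⟩ := odd_of_dvd_odd ⟨p.2, h3.symm⟩ hN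
      refine ⟨hp1, hp2, h3, ⟨2 ^ e * (p.2 : ℤ) - t - 1, ?_⟩, h5⟩
      have : (p.1 : ℤ) = 2 * t + 1 := by exact_mod_cast congrArg (Nat.cast : ℕ → ℤ) ht
      rw [this]; push_cast; ring
  have hAset : {p : ℕ × ℕ | 0 < p.1 ∧ 0 < p.2 ∧ p.1 * p.2 = N ∧
      Odd ((p.2 : ℤ) - 2 ^ (e + 1) * (p.1 : ℤ)) ∧
      2 * (m : ℤ) + 1 ≤ (p.2 : ℤ) - 2 ^ (e + 1) * (p.1 : ℤ)} = ↑A := by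
    ext p
    simp only [Set.mem_setOf_eq, Finset.coe_filter, hA, Nat.mem_divisorsAntidiagonal,
      Set.mem_setOf_eq]
    constructor
    · rintro ⟨h1, h2, h3, h4, h5⟩; exact ⟨⟨h3, hN0⟩, h5⟩
    · rintro ⟨⟨h3, _⟩, h5⟩
      have hp1 : 0 < p.1 := Nat.pos_of_ne_zero (fun h => hN0 (by rw [← h3, h, zero_mul]))
      have hp2 : 0 < p.2 := Nat.pos_of_ne_zero (fun h => hN0 (by rw [← h3, h, mul_zero]))
      have hdvd2 : p.2 ∣ N := ⟨p.1, by rw [← h3]; ring⟩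
      obtain ⟨t, ht⟩ := odd_of_dvd_odd hdvd2 hN
      refine ⟨hp1, hp2, h3, ⟨t - 2 ^ e * (p.1 : ℤ), ?_⟩, h5⟩
      have : (p.2 : ℤ) = 2 * t + 1 := by exact_mod_cast congrArg (Nat.cast : ℕ → ℤ) ht
      rw [this]; push_cast; ring
  have hAB : A ⊆ B := by
    intro p hp
    obtain ⟨hpd, hple⟩ := Finset.mem_filter.mp hp
    obtain ⟨hpmul, _⟩ := Nat.mem_divisorsAntidiagonal.mp hpd
    refine Finset.mem_filter.mpr ⟨hpd, ?_⟩
    have hp1 : 0 < p.1 := Nat.pos_of_ne_zero (fun h => hN0 (by rw [← hpmul, h, zero_mul]))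
    have hp2 : 0 < p.2 := Nat.pos_of_ne_zero (fun h => hN0 (by rw [← hpmul, h, mul_zero]))
    have h1 : (0 : ℤ) < p.1 := by exact_mod_cast hp1
    have h2 : (0 : ℤ) < p.2 := by exact_mod_cast hp2
    have h3 : (2 : ℤ) ≤ 2 ^ (e + 1) := by
      calc (2 : ℤ) = 2 ^ 1 := (pow_one 2).symm
        _ ≤ 2 ^ (e + 1) := pow_le_pow_right₀ (by norm_num) (by omega)
    nlinarith [mul_nonneg (by linarith : (0 : ℤ) ≤ 2 ^ (e + 1) - 1)
      (by linarith : (0 : ℤ) ≤ (p.1 : ℤ) + (p.2 : ℤ))]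
  rw [hBset, hAset, Set.ncard_coe_finset, Set.ncard_coe_finset]
  refine ⟨?_, Finset.card_le_card hAB, ?_⟩
  · rw [hsplit, hcardB, ← hcardA]
  · rw [hsplit]
    have := Finset.card_le_card hAB
    omega
end

section
/- Let m >= 0 and n >= 1 be integers with n even. Then X^(m)(n) = M2^(m)(n) - M1^(m)(n), where M1^(m)(n) is the number of lattice points with odd y-coordinate in Omega = { (x,y) in R^2 : x*y < (n+1)/2, y - 6x < 2m, y - 4x > 2m, x > 0, y > 0 } and M2^(m)(n) is the number of lattice points with odd y-coordinate in Omega' = { (x,y) in R^2 : x*y < (n+1)/2, 2x - 3y < 2m, 4x - y > 2m, x > 0, y > 0 }. -/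
/-!
Expanding `1/(1-q^{2k})` and `1/(1-q^k)`, the coefficient of `q^N` of the first sum is
`∑ (-1)^k` over the factorisations `N = k w` with `w ≥ 3k+2m+1`, `k + w` odd, and that of the
second one over the factorisations `2N = k v` with `v ≥ k+2m+1`, `k + v` odd. Dividing by
`1 - q^2` adds up the coefficients at `0, 2, …, 2t`, so `X^(m)(2t)` is a signed count of lattice
points under the hyperbolas `k w ≤ 2t` and `k v ≤ 4t`, `4 ∣ k v`. Split by the parity of `k` and
divide the even coordinate by `2` resp. `4`: each of the four pieces counts points `(x, y)` with
`x y ≤ t`, `y` odd, in a wedge; wedges of equal parity are nested, and their differences are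
`Ω` and `Ω'`.
-/

open Finset

def underHyperbola (T : ℕ) (P : ℕ → ℕ → Prop) [DecidableRel P] : Finset (ℕ × ℕ) :=
  {p ∈ Icc 1 T ×ˢ Icc 1 T | p.1 * p.2 ≤ T ∧ P p.1 p.2}

section underHyperbola

variable {T : ℕ} {P Q : ℕ → ℕ → Prop} [DecidableRel P] [DecidableRel Q]

theorem mem_underHyperbola {p : ℕ × ℕ} :
    p ∈ underHyperbola T P ↔ 0 < p.1 ∧ 0 < p.2 ∧ p.1 * p.2 ≤ T ∧ P p.1 p.2 := by
  obtain ⟨x, y⟩ := p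
  simp only [underHyperbola, mem_filter, mem_product, mem_Icc]
  constructor
  · rintro ⟨⟨⟨hx, -⟩, hy, -⟩, hxy, hP⟩
    exact ⟨hx, hy, hxy, hP⟩
  · rintro ⟨hx, hy, hxy, hP⟩
    have := Nat.le_mul_of_pos_right x hy
    have := Nat.le_mul_of_pos_left y hx
    exact ⟨⟨⟨hx, by omega⟩, hy, by omega⟩, hxy, hP⟩

theorem underHyperbola_congr (h : ∀ x y, 0 < x → 0 < y → (P x y ↔ Q x y)) :
    underHyperbola T P = underHyperbola T Q := by
  ext ⟨x, y⟩
  simp only [mem_underHyperbola]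
  constructor <;> rintro ⟨hx, hy, hxy, hP⟩
  exacts [⟨hx, hy, hxy, (h x y hx hy).1 hP⟩, ⟨hx, hy, hxy, (h x y hx hy).2 hP⟩]

theorem filter_underHyperbola :
    {p ∈ underHyperbola T P | Q p.1 p.2} = underHyperbola T fun x y => P x y ∧ Q x y := by
  ext p
  simp only [mem_filter, mem_underHyperbola, and_assoc]

theorem card_underHyperbola_swap :
    #(underHyperbola T fun x y => P y x) = #(underHyperbola T P) := by
  refine card_nbij' Prod.swap Prod.swap ?_ ?_ (fun _ _ => rfl) (fun _ _ => rfl) <;>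
  · rintro ⟨x, y⟩
    simp only [mem_coe, mem_underHyperbola, Prod.fst_swap, Prod.snd_swap, mul_comm y x]
    tauto

theorem card_underHyperbola_dvd_fst {c : ℕ} (hc : 0 < c) :
    #(underHyperbola (c * T) fun x y => c ∣ x ∧ P (x / c) y) = #(underHyperbola T P) := by
  refine card_nbij' (fun p => (p.1 / c, p.2)) (fun p => (c * p.1, p.2)) ?_ ?_ ?_ ?_
  · rintro ⟨_, y⟩ hp
    simp only [mem_coe, mem_underHyperbola] at hp ⊢
    obtain ⟨hx, hy, hxy, ⟨x, rfl⟩, hP⟩ := hp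
    rw [Nat.mul_div_cancel_left x hc] at hP ⊢
    rw [mul_assoc, Nat.mul_le_mul_left_iff hc] at hxy
    exact ⟨Nat.pos_of_mul_pos_left hx, hy, hxy, hP⟩
  · rintro ⟨x, y⟩ hp
    simp only [mem_coe, mem_underHyperbola] at hp ⊢
    obtain ⟨hx, hy, hxy, hP⟩ := hp
    rw [Nat.mul_div_cancel_left x hc, mul_assoc, Nat.mul_le_mul_left_iff hc]
    exact ⟨Nat.mul_pos hc hx, hy, hxy, dvd_mul_right c x, hP⟩
  · rintro ⟨_, y⟩ hp
    simp only [mem_coe, mem_underHyperbola] at hp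
    obtain ⟨-, -, -, ⟨x, rfl⟩, -⟩ := hp
    simp [Nat.mul_div_cancel_left x hc]
  · rintro ⟨x, y⟩ -
    simp [Nat.mul_div_cancel_left x hc]

theorem card_underHyperbola_dvd_snd {c : ℕ} (hc : 0 < c) :
    #(underHyperbola (c * T) fun x y => c ∣ y ∧ P (y / c) x) = #(underHyperbola T P) := by
  rw [← card_underHyperbola_swap, card_underHyperbola_dvd_fst hc]

theorem card_underHyperbola_and_not :
    (#(underHyperbola T fun x y => P x y ∧ ¬ Q x y) : ℤ) =
      #(underHyperbola T P) - #(underHyperbola T fun x y => P x y ∧ Q x y) := by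
  rw [← filter_underHyperbola, ← filter_underHyperbola,
    ← card_filter_add_card_filter_not (s := underHyperbola T P) (fun p => Q p.1 p.2)]
  push_cast
  ring

theorem sum_neg_one_pow_underHyperbola :
    ∑ p ∈ underHyperbola T P, (-1 : ℤ) ^ p.1 =
      #(underHyperbola T fun x y => P x y ∧ Even x) -
        #(underHyperbola T fun x y => P x y ∧ ¬ Even x) := by
  rw [← filter_underHyperbola, ← filter_underHyperbola,
    ← sum_filter_add_sum_filter_not _ (fun p => Even p.1)]
  rw [sum_congr rfl fun p hp => (mem_filter.1 hp).2.neg_one_pow,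
    sum_congr rfl fun p hp => (Nat.not_even_iff_odd.1 (mem_filter.1 hp).2).neg_one_pow]
  simp [sub_eq_add_neg]

end underHyperbola

theorem sum_range_sum_divisorsAntidiagonal {M : Type*} [AddCommMonoid M] {d : ℕ} (hd : 0 < d)
    (t : ℕ) (f : ℕ × ℕ → M) :
    ∑ i ∈ range (t + 1), ∑ p ∈ (d * i).divisorsAntidiagonal, f p =
      ∑ p ∈ underHyperbola (d * t) (fun x y => d ∣ x * y), f p := by
  have hmaps : ∀ p ∈ underHyperbola (d * t) (fun x y => d ∣ x * y),
      p.1 * p.2 / d ∈ range (t + 1) := fun p hp =>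
    mem_range.2 (Nat.lt_succ_of_le (Nat.div_le_of_le_mul (mem_underHyperbola.1 hp).2.2.1))
  rw [← sum_fiberwise_of_maps_to hmaps]
  refine sum_congr rfl fun i hi => sum_congr ?_ fun _ _ => rfl
  ext ⟨x, y⟩
  have hit : i ≤ t := Nat.lt_succ_iff.1 (mem_range.1 hi)
  simp only [Nat.mem_divisorsAntidiagonal, mem_filter, mem_underHyperbola]
  constructor
  · rintro ⟨hxy, hi0⟩
    have hpos : 0 < x * y := Nat.pos_of_ne_zero (hxy ▸ hi0)
    refine ⟨⟨Nat.pos_of_mul_pos_right hpos, Nat.pos_of_mul_pos_left hpos,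
      hxy ▸ Nat.mul_le_mul_left d hit, ⟨i, hxy⟩⟩, ?_⟩
    rw [hxy, Nat.mul_div_cancel_left i hd]
  · rintro ⟨⟨hx, hy, -, k, hk⟩, rfl⟩
    rw [hk, Nat.mul_div_cancel_left k hd]
    exact ⟨rfl, hk ▸ (Nat.mul_pos hx hy).ne'⟩

theorem coeff_two_mul_eq_sum_range {R : Type*} [CommRing R] {a : ℕ → R} {F : PowerSeries R}
    (h : (1 - PowerSeries.X ^ 2) * PowerSeries.mk a = F) (t : ℕ) :
    a (2 * t) = ∑ i ∈ range (t + 1), PowerSeries.coeff (2 * i) F := by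
  have hcoeff (N : ℕ) : PowerSeries.coeff N F = a N - if 2 ≤ N then a (N - 2) else 0 := by
    rw [← h, sub_mul, one_mul, map_sub, PowerSeries.coeff_X_pow_mul', PowerSeries.coeff_mk]
    split_ifs <;> simp
  induction t with
  | zero => simp [hcoeff]
  | succ t ih =>
    rw [sum_range_succ, ← ih, hcoeff, if_pos (by omega), show 2 * (t + 1) - 2 = 2 * t by omega]
    ring

theorem coeff_C_mul_X_pow_mul_geomSer_s11 (c : ℤ) (e d N : ℕ) :
    PowerSeries.coeff N (PowerSeries.C c * PowerSeries.X ^ e * geomSer d) =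
      if e ≤ N ∧ d ∣ N - e then c else 0 := by
  rw [mul_assoc, PowerSeries.coeff_C_mul, PowerSeries.coeff_X_pow_mul', geomSer]
  split_ifs <;> simp_all

theorem mul_le_and_two_mul_dvd_sub_iff {k a w : ℕ} (hk : 0 < k) :
    k * a ≤ k * w ∧ 2 * k ∣ k * w - k * a ↔ a ≤ w ∧ Even (w - a) := by
  rw [← Nat.mul_sub, mul_comm 2 k, Nat.mul_dvd_mul_iff_left hk, Nat.mul_le_mul_left_iff hk,
    even_iff_two_dvd]

theorem sum_Icc_ite_eq_sum_divisorsAntidiagonal {M : Type*} [AddCommMonoid M] (N : ℕ)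
    (a : ℕ → ℕ) (c : ℕ → M) :
    ∑ k ∈ Icc 1 N, (if k * a k ≤ N ∧ 2 * k ∣ N - k * a k then c k else 0) =
      ∑ p ∈ N.divisorsAntidiagonal, if a p.1 ≤ p.2 ∧ Even (p.2 - a p.1) then c p.1 else 0 := by
  rw [Nat.sum_divisorsAntidiagonal (fun k w => if a k ≤ w ∧ Even (w - a k) then c k else 0)]
  have hsub : N.divisors ⊆ Icc 1 N := fun k hk =>
    mem_Icc.2 ⟨Nat.pos_of_mem_divisors hk, Nat.divisor_le hk⟩
  rw [← sum_subset hsub]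
  · refine sum_congr rfl fun k hk => ?_
    obtain ⟨hkN, -⟩ := Nat.mem_divisors.1 hk
    conv_lhs => rw [← Nat.mul_div_cancel' hkN]
    exact if_congr (mul_le_and_two_mul_dvd_sub_iff (Nat.pos_of_mem_divisors hk)) rfl rfl
  · intro k hk hkN
    rw [if_neg]
    rintro ⟨hle, hdvd⟩
    have : k ∣ N - k * a k + k * a k := (dvd_trans (dvd_mul_left k 2) hdvd).add (dvd_mul_right k _)
    rw [Nat.sub_add_cancel hle] at this
    exact hkN (Nat.mem_divisors.2 ⟨this, by have := mem_Icc.1 hk; omega⟩)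

theorem coeff_seriesA (m N : ℕ) :
    PowerSeries.coeff N (seriesA m) = ∑ p ∈ N.divisorsAntidiagonal,
      if 3 * p.1 + 1 + 2 * m ≤ p.2 ∧ Even (p.2 - (3 * p.1 + 1 + 2 * m)) then (-1) ^ p.1 else 0 := by
  rw [seriesA, PowerSeries.coeff_mk, ← sum_Icc_ite_eq_sum_divisorsAntidiagonal N
    (fun k => 3 * k + 1 + 2 * m) (fun k => (-1) ^ k)]
  refine sum_congr rfl fun k _ => ?_
  have hexp : k * (3 * k + 1) + 2 * m * k = k * (3 * k + 1 + 2 * m) := by ring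
  rw [coeff_C_mul_X_pow_mul_geomSer_s11, hexp]

theorem coeff_seriesB_s11 (m N : ℕ) :
    PowerSeries.coeff N (seriesB m) = ∑ p ∈ (2 * N).divisorsAntidiagonal,
      if p.1 + 1 + 2 * m ≤ p.2 ∧ Even (p.2 - (p.1 + 1 + 2 * m)) then (-1) ^ p.1 else 0 := by
  rw [seriesB, PowerSeries.coeff_mk, ← sum_Icc_ite_eq_sum_divisorsAntidiagonal (2 * N)
    (fun k => k + 1 + 2 * m) (fun k => (-1) ^ k)]
  have hsub : Icc 1 N ⊆ Icc 1 (2 * N) := Icc_subset_Icc_right (by omega)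
  rw [← sum_subset hsub]
  · refine sum_congr rfl fun k _ => ?_
    have hexp : k * (k + 1 + 2 * m) = 2 * (k * (k + 1) / 2 + m * k) := by
      have := Nat.div_mul_cancel (Nat.even_mul_succ_self k).two_dvd
      linarith
    have hcond : k * (k + 1) / 2 + m * k ≤ N ∧ k ∣ N - (k * (k + 1) / 2 + m * k) ↔
        k * (k + 1 + 2 * m) ≤ 2 * N ∧ 2 * k ∣ 2 * N - k * (k + 1 + 2 * m) := by
      rw [hexp, ← Nat.mul_sub, Nat.mul_dvd_mul_iff_left two_pos, Nat.mul_le_mul_left_iff two_pos]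
    rw [coeff_C_mul_X_pow_mul_geomSer_s11]
    exact if_congr hcond rfl rfl
  · intro k hk hkN
    simp only [mem_Icc, not_and, not_le] at hk hkN
    rw [if_neg]
    rintro ⟨hle, -⟩
    nlinarith [hkN hk.1]

theorem sum_range_coeff_seriesA (m t : ℕ) :
    ∑ i ∈ range (t + 1), PowerSeries.coeff (2 * i) (seriesA m) =
      (#(underHyperbola t fun x y => 6 * x + 2 * m < y ∧ Odd y) : ℤ) -
        #(underHyperbola t fun x y => 3 * y + 2 * m < 2 * x ∧ Odd y) := by
  simp_rw [coeff_seriesA]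
  rw [sum_range_sum_divisorsAntidiagonal two_pos, ← sum_filter,
    filter_underHyperbola (Q := fun x y => 3 * x + 1 + 2 * m ≤ y ∧ Even (y - (3 * x + 1 + 2 * m))),
    sum_neg_one_pow_underHyperbola]
  congr 2
  · refine .trans ?_ (card_underHyperbola_dvd_fst two_pos)
    congr 1
    refine underHyperbola_congr fun x y _ _ => ?_
    have : 2 ∣ x → 2 ∣ x * y := fun h => dvd_mul_of_dvd_left h y
    simp only [Nat.even_iff, Nat.odd_iff, Nat.dvd_iff_mod_eq_zero] at *
    omega
  · refine .trans ?_ (card_underHyperbola_dvd_snd two_pos)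
    congr 1
    refine underHyperbola_congr fun x y _ _ => ?_
    have : 2 ∣ y → 2 ∣ x * y := fun h => dvd_mul_of_dvd_right h x
    simp only [Nat.even_iff, Nat.odd_iff, Nat.dvd_iff_mod_eq_zero] at *
    omega

theorem four_dvd_mul_iff_of_odd_right {x y : ℕ} (hy : Odd y) : 4 ∣ x * y ↔ 4 ∣ x :=
  (Nat.Coprime.pow_left 2 (Nat.coprime_two_left.2 hy)).dvd_mul_right

theorem sum_range_coeff_seriesB (m t : ℕ) :
    ∑ i ∈ range (t + 1), PowerSeries.coeff (2 * i) (seriesB m) =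
      (#(underHyperbola t fun x y => 4 * x + 2 * m < y ∧ Odd y) : ℤ) -
        #(underHyperbola t fun x y => y + 2 * m < 4 * x ∧ Odd y) := by
  simp_rw [coeff_seriesB_s11, ← mul_assoc, show 2 * 2 = 4 from rfl]
  rw [sum_range_sum_divisorsAntidiagonal four_pos, ← sum_filter,
    filter_underHyperbola (Q := fun x y => x + 1 + 2 * m ≤ y ∧ Even (y - (x + 1 + 2 * m))),
    sum_neg_one_pow_underHyperbola]
  congr 2
  · refine .trans ?_ (card_underHyperbola_dvd_fst four_pos)
    congr 1
    refine underHyperbola_congr fun x y _ _ => ?_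
    have := @four_dvd_mul_iff_of_odd_right x y
    simp only [Nat.even_iff, Nat.odd_iff, Nat.dvd_iff_mod_eq_zero] at *
    omega
  · refine .trans ?_ (card_underHyperbola_dvd_snd four_pos)
    congr 1
    refine underHyperbola_congr fun x y _ _ => ?_
    have := mul_comm x y ▸ @four_dvd_mul_iff_of_odd_right y x
    simp only [Nat.even_iff, Nat.odd_iff, Nat.dvd_iff_mod_eq_zero] at *
    omega

theorem ncard_eq_card_of_natCast_mem_iff {S : Set (ℤ × ℤ)} {F : Finset (ℕ × ℕ)}
    (hpos : ∀ p ∈ S, 0 ≤ p.1 ∧ 0 ≤ p.2) (hmem : ∀ x y : ℕ, ((x : ℤ), (y : ℤ)) ∈ S ↔ (x, y) ∈ F) :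
    S.ncard = #F := by
  have hS : S = Prod.map (Nat.cast : ℕ → ℤ) Nat.cast '' F := by
    ext ⟨X, Y⟩
    constructor
    · intro h
      obtain ⟨hX, hY⟩ := hpos _ h
      lift X to ℕ using hX
      lift Y to ℕ using hY
      exact ⟨(X, Y), (hmem X Y).1 h, rfl⟩
    · rintro ⟨⟨x, y⟩, hF, hxy⟩
      rw [← hxy]
      exact (hmem x y).2 hF
  rw [hS, Set.ncard_image_of_injective _ (Nat.cast_injective.prodMap Nat.cast_injective),
    Set.ncard_coe_finset]

theorem intCast_mul_lt_half_iff {X Y : ℤ} {t : ℕ} :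
    (X : ℝ) * Y < ((2 * t : ℕ) + 1) / 2 ↔ X * Y ≤ t := by
  rw [lt_div_iff₀ two_pos]
  norm_cast
  omega

theorem ncard_Ω (m t : ℕ) :
    (Set.ncard {p : ℤ × ℤ | ((p.1 : ℝ), (p.2 : ℝ)) ∈ {P : ℝ × ℝ |
      P.1 * P.2 < ((↑(2 * t) : ℝ) + 1) / 2 ∧ P.2 - 6 * P.1 < 2 * (m : ℝ) ∧
        P.2 - 4 * P.1 > 2 * (m : ℝ) ∧ P.1 > 0 ∧ P.2 > 0} ∧ Odd p.2} : ℤ) =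
      #(underHyperbola t fun x y => 4 * x + 2 * m < y ∧ Odd y) -
        #(underHyperbola t fun x y => 6 * x + 2 * m < y ∧ Odd y) := by
  rw [ncard_eq_card_of_natCast_mem_iff
    (F := underHyperbola t fun x y => (4 * x + 2 * m < y ∧ Odd y) ∧ ¬ 6 * x + 2 * m < y),
    card_underHyperbola_and_not]
  · congr 2
    exact congrArg card (underHyperbola_congr fun x y _ _ => by simp only [Nat.odd_iff]; omega)
  · rintro p ⟨⟨-, -, -, h1, h2⟩, -⟩
    exact ⟨(Int.cast_pos.1 h1).le, (Int.cast_pos.1 h2).le⟩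
  · intro x y
    simp only [Set.mem_ofPred_eq, mem_underHyperbola, intCast_mul_lt_half_iff, sub_lt_iff_lt_add,
      gt_iff_lt, lt_sub_iff_add_lt]
    norm_cast
    simp only [Nat.odd_iff]
    omega

theorem ncard_Ω' (m t : ℕ) :
    (Set.ncard {p : ℤ × ℤ | ((p.1 : ℝ), (p.2 : ℝ)) ∈ {P : ℝ × ℝ |
      P.1 * P.2 < ((↑(2 * t) : ℝ) + 1) / 2 ∧ 2 * P.1 - 3 * P.2 < 2 * (m : ℝ) ∧
        4 * P.1 - P.2 > 2 * (m : ℝ) ∧ P.1 > 0 ∧ P.2 > 0} ∧ Odd p.2} : ℤ) =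
      #(underHyperbola t fun x y => y + 2 * m < 4 * x ∧ Odd y) -
        #(underHyperbola t fun x y => 3 * y + 2 * m < 2 * x ∧ Odd y) := by
  rw [ncard_eq_card_of_natCast_mem_iff
    (F := underHyperbola t fun x y => (y + 2 * m < 4 * x ∧ Odd y) ∧ ¬ 3 * y + 2 * m < 2 * x),
    card_underHyperbola_and_not]
  · congr 2
    exact congrArg card (underHyperbola_congr fun x y _ _ => by simp only [Nat.odd_iff]; omega)
  · rintro p ⟨⟨-, -, -, h1, h2⟩, -⟩
    exact ⟨(Int.cast_pos.1 h1).le, (Int.cast_pos.1 h2).le⟩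
  · intro x y
    simp only [Set.mem_ofPred_eq, mem_underHyperbola, intCast_mul_lt_half_iff, sub_lt_iff_lt_add,
      gt_iff_lt, lt_sub_iff_add_lt]
    norm_cast
    simp only [Nat.odd_iff]
    omega

theorem stmt11_general (m : ℕ) (Xc : ℕ → ℤ)
    (hX : (1 - PowerSeries.X ^ 2) * PowerSeries.mk Xc = seriesA m - seriesB m)
    (n : ℕ) (hne : Even n)
    (Ω Ω' : Set (ℝ × ℝ))
    (hΩ : Ω = {P : ℝ × ℝ | P.1 * P.2 < ((n : ℝ) + 1) / 2 ∧ P.2 - 6 * P.1 < 2 * (m : ℝ) ∧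
      P.2 - 4 * P.1 > 2 * (m : ℝ) ∧ P.1 > 0 ∧ P.2 > 0})
    (hΩ' : Ω' = {P : ℝ × ℝ | P.1 * P.2 < ((n : ℝ) + 1) / 2 ∧
      2 * P.1 - 3 * P.2 < 2 * (m : ℝ) ∧ 4 * P.1 - P.2 > 2 * (m : ℝ) ∧ P.1 > 0 ∧ P.2 > 0})
    (M1 M2 : ℕ)
    (hM1 : M1 = Set.ncard {p : ℤ × ℤ | ((p.1 : ℝ), (p.2 : ℝ)) ∈ Ω ∧ Odd p.2})
    (hM2 : M2 = Set.ncard {p : ℤ × ℤ | ((p.1 : ℝ), (p.2 : ℝ)) ∈ Ω' ∧ Odd p.2}) :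
    Xc n = (M2 : ℤ) - (M1 : ℤ) := by
  obtain ⟨t, rfl⟩ := hne.two_dvd
  subst hΩ hΩ' hM1 hM2
  rw [coeff_two_mul_eq_sum_range hX, ncard_Ω, ncard_Ω']
  simp only [map_sub, sum_sub_distrib]
  rw [sum_range_coeff_seriesA, sum_range_coeff_seriesB]
  ring

/-- Let `m ≥ 0` and `n ≥ 1` be integers with `n` even. Then
`X^(m)(n) = M₂^(m)(n) - M₁^(m)(n)`, where `M₁^(m)(n)` is the number of lattice points with
odd `y`-coordinate in `Ω = {(x,y) : xy < (n+1)/2, y-6x < 2m, y-4x > 2m, x > 0, y > 0}` and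
`M₂^(m)(n)` is the number of lattice points with odd `y`-coordinate in
`Ω' = {(x,y) : xy < (n+1)/2, 2x-3y < 2m, 4x-y > 2m, x > 0, y > 0}`. -/
theorem stmt11 (m : ℕ) (Xc : ℕ → ℤ)
    (hX : (1 - PowerSeries.X ^ 2) * PowerSeries.mk Xc = seriesA m - seriesB m)
    (n : ℕ) (hn : 1 ≤ n) (hne : Even n)
    (Ω Ω' : Set (ℝ × ℝ))
    (hΩ : Ω = {P : ℝ × ℝ | P.1 * P.2 < ((n : ℝ) + 1) / 2 ∧ P.2 - 6 * P.1 < 2 * (m : ℝ) ∧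
      P.2 - 4 * P.1 > 2 * (m : ℝ) ∧ P.1 > 0 ∧ P.2 > 0})
    (hΩ' : Ω' = {P : ℝ × ℝ | P.1 * P.2 < ((n : ℝ) + 1) / 2 ∧
      2 * P.1 - 3 * P.2 < 2 * (m : ℝ) ∧ 4 * P.1 - P.2 > 2 * (m : ℝ) ∧ P.1 > 0 ∧ P.2 > 0})
    (M1 M2 : ℕ)
    (hM1 : M1 = Set.ncard {p : ℤ × ℤ | ((p.1 : ℝ), (p.2 : ℝ)) ∈ Ω ∧ Odd p.2})
    (hM2 : M2 = Set.ncard {p : ℤ × ℤ | ((p.1 : ℝ), (p.2 : ℝ)) ∈ Ω' ∧ Odd p.2}) :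
    Xc n = (M2 : ℤ) - (M1 : ℤ) :=
  stmt11_general m Xc hX n hne Ω Ω' hΩ hΩ' M1 M2 hM1 hM2
end
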